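/- arXiv:1610.09209 — 11 statements merged into one kernel-verified Lean document; each statement's English description precedes it below -/
import Mathlib

section
/- Let H be a separable infinite-dimensional complex Hilbert space and let s be a function from the closed subspaces of H to the real interval [0,1]. Then s is a state if and only if s satisfies: (S1) s(⊥) = 0 and s(⊤) = 1; (S2) for every decreasing sequence (P_n) of closed subspaces (P_{n+1} ≤ P_n for all n), s(⋂_n P_n) = ⨅_n s(P_n), where ⋂_n P_n is the intersection of the P_n (itself a closed subspace); (S3) s of the topological closure of P ⊔ Q equals s(P) + s(Q) whenever P ⊥ Q. -/
open scoped InnerProductSpace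

noncomputable section

variable {H : Type*} [NormedAddCommGroup H] [InnerProductSpace ℂ H] [CompleteSpace H]

/-- The type of closed subspaces of a complex inner product space `H`. -/
abbrev ClosedSubspace (H : Type*) [NormedAddCommGroup H] [InnerProductSpace ℂ H] :=
  {P : Submodule ℂ H // IsClosed (P : Set H)}

/-- The trivial closed subspace `{0}`. -/
def csBot : ClosedSubspace H :=
  ⟨⊥, by rw [Submodule.bot_coe]; exact isClosed_singleton⟩

/-- The total closed subspace `H`. -/
def csTop : ClosedSubspace H :=
  ⟨⊤, by rw [Submodule.top_coe]; exact isClosed_univ⟩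

/-- Orthogonal projection onto a closed subspace, as a map `H → H`. -/
noncomputable def cproj (P : ClosedSubspace H) (x : H) : H :=
  letI : CompleteSpace P.1 := P.2.completeSpace_coe
  (P.1.orthogonalProjectionOnto x : H)

/-- Two subspaces are orthogonal: every vector of one is orthogonal to every
vector of the other. -/
def OrthoSub (P Q : Submodule ℂ H) : Prop :=
  ∀ x ∈ P, ∀ y ∈ Q, ⟪x, y⟫_ℂ = 0

/-- A (quantum) state: a `[0,1]`-valued map on closed subspaces with `s ⊥ = 0`,
`s ⊤ = 1` which is countably additive on pairwise orthogonal families (where the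
"sup" of such a family is the topological closure of the lattice supremum). -/
def IsState (s : ClosedSubspace H → ℝ) : Prop :=
  (∀ P, s P ∈ Set.Icc (0 : ℝ) 1) ∧
  s csBot = 0 ∧ s csTop = 1 ∧
  ∀ P : ℕ → ClosedSubspace H, (∀ m n, m ≠ n → OrthoSub (P m).1 (P n).1) →
    s ⟨(⨆ n, (P n).1).topologicalClosure, Submodule.isClosed_topologicalClosure _⟩
      = ∑' n, s (P n)

/-- A (quantum) observable: a projector-valued measure on the Borel subsets of `ℝ`. -/
def IsObservable (o : {X : Set ℝ // MeasurableSet X} → ClosedSubspace H) : Prop :=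
  o ⟨∅, MeasurableSet.empty⟩ = csBot ∧
  o ⟨Set.univ, MeasurableSet.univ⟩ = csTop ∧
  (∀ X : ℕ → {X : Set ℝ // MeasurableSet X},
    o ⟨⋃ n, (X n).1, MeasurableSet.iUnion fun n => (X n).2⟩
      = ⟨(⨆ n, (o (X n)).1).topologicalClosure,
          Submodule.isClosed_topologicalClosure _⟩) ∧
  ∀ X Y : {X : Set ℝ // MeasurableSet X}, X.1 ∩ Y.1 = ∅ → OrthoSub (o X).1 (o Y).1

/-
For a state `s`, additivity on an orthogonal pair is countable additivity on the sequence
`P, Q, ⊥, ⊥, …`. For a decreasing sequence `(P n)` with intersection `Q`, every `P N` is the closed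
span of `Q` and the orthogonal pieces `P k ⊓ (P (k + 1))ᗮ`, `k ≥ N`: a vector of `P N` orthogonal
to all of them lies, step by step, in every `P k`, hence in `Q`, hence is `0`. So
`s (P N) = s Q + ∑_{k ≥ N} s (P k ⊓ (P (k + 1))ᗮ)`, and the tails of the series tend to `0`.

Conversely, for pairwise orthogonal `(P n)` with closed span `T`, finite additivity gives
`s T = ∑_{n < N} s (P n) + s R_N`, where `R_N` is the orthogonal complement in `T` of the span of
the first `N` terms. The `R_N` decrease to `⊥`, so (S2) makes `s R_N` tend to `0`.
-/

namespace Submodule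

theorem topologicalClosure_sup_topologicalClosure_right {R M : Type*} [Semiring R]
    [AddCommMonoid M] [Module R M] [TopologicalSpace M] [ContinuousAdd M]
    [ContinuousConstSMul R M] (A B : Submodule R M) :
    (A ⊔ B.topologicalClosure).topologicalClosure = (A ⊔ B).topologicalClosure :=
  le_antisymm
    (topologicalClosure_minimal _
      (sup_le (le_sup_left.trans (le_topologicalClosure _))
        (topologicalClosure_mono le_sup_right))
      (isClosed_topologicalClosure _))
    (topologicalClosure_mono (sup_le_sup_left (le_topologicalClosure B) A))

theorem mem_of_mem_orthogonal_inf {𝕜 E : Type*} [RCLike 𝕜] [NormedAddCommGroup E]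
    [InnerProductSpace 𝕜 E] {A B : Submodule 𝕜 E} [A.HasOrthogonalProjection] (hAB : A ≤ B)
    {x : E} (hxB : x ∈ B) (hx : x ∈ (Aᗮ ⊓ B)ᗮ) : x ∈ A := by
  obtain ⟨a, ha, d, hd, rfl⟩ :=
    mem_sup.1 ((sup_orthogonal_inf_of_hasOrthogonalProjection hAB).ge hxB)
  have hdd : ⟪d, d⟫_𝕜 = 0 := by
    have h := (mem_orthogonal _ _).1 hx d hd
    rwa [inner_add_right, inner_eq_zero_symm.1 (hd.1 a ha), zero_add] at h
  rwa [inner_self_eq_zero.1 hdd, add_zero]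

end Submodule

open Filter Topology Submodule

def csClosure (K : Submodule ℂ H) : ClosedSubspace H :=
  ⟨K.topologicalClosure, K.isClosed_topologicalClosure⟩

def csIInf (P : ℕ → ClosedSubspace H) : ClosedSubspace H :=
  ⟨⨅ n, (P n).1, by rw [coe_iInf]; exact isClosed_iInter fun n => (P n).2⟩

def csDiff (B A : ClosedSubspace H) : ClosedSubspace H :=
  ⟨A.1ᗮ ⊓ B.1, A.1.isClosed_orthogonal.inter B.2⟩

instance (P : ClosedSubspace H) : P.1.HasOrthogonalProjection :=
  haveI := P.2.completeSpace_coe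
  inferInstance

/-- Condition (S2). -/
def IsContinuousFromAbove (s : ClosedSubspace H → ℝ) : Prop :=
  ∀ P : ℕ → ClosedSubspace H, (∀ n, (P (n + 1)).1 ≤ (P n).1) → s (csIInf P) = ⨅ n, s (P n)

/-- Condition (S3). -/
def IsOrthoAdditive (s : ClosedSubspace H → ℝ) : Prop :=
  ∀ P Q : ClosedSubspace H, OrthoSub P.1 Q.1 → s (csClosure (P.1 ⊔ Q.1)) = s P + s Q

section

variable {E : Type*} [NormedAddCommGroup E] [InnerProductSpace ℂ E]

theorem orthoSub_iff_le_orthogonal {P Q : Submodule ℂ E} : OrthoSub P Q ↔ Q ≤ Pᗮ :=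
  ⟨fun h y hy => (mem_orthogonal P y).2 fun x hx => h x hx y hy,
    fun h x hx y hy => (mem_orthogonal P y).1 (h hy) x hx⟩

theorem OrthoSub.symm {P Q : Submodule ℂ E} (h : OrthoSub P Q) : OrthoSub Q P :=
  fun x hx y hy => inner_eq_zero_symm.1 (h y hy x hx)

theorem orthoSub_bot_left (Q : Submodule ℂ E) : OrthoSub ⊥ Q := fun x hx y _ => by
  rw [(mem_bot ℂ).1 hx, inner_zero_left]

theorem orthoSub_bot_right (Q : Submodule ℂ E) : OrthoSub Q ⊥ :=
  (orthoSub_bot_left Q).symm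

theorem orthoSub_topologicalClosure_right {P Q : Submodule ℂ E} :
    OrthoSub P Q.topologicalClosure ↔ OrthoSub P Q := by
  simp only [orthoSub_iff_le_orthogonal]
  exact ⟨(le_topologicalClosure Q).trans,
    fun h => Q.topologicalClosure_minimal h P.isClosed_orthogonal⟩

variable {s : ClosedSubspace E → ℝ}

theorem IsOrthoAdditive.apply_csClosure_biSup (hs : IsOrthoAdditive s) (hbot : s csBot = 0)
    {G : ℕ → ClosedSubspace E} (hG : ∀ m n, m ≠ n → OrthoSub (G m).1 (G n).1) (N : ℕ) :
    s (csClosure (⨆ n < N, (G n).1)) = ∑ n ∈ Finset.range N, s (G n) := by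
  induction N with
  | zero =>
    rw [Finset.sum_range_zero, ← hbot]
    exact congrArg s (Subtype.ext (by simp [csClosure, csBot]))
  | succ N ih =>
    have horth : OrthoSub (G N).1 (csClosure (⨆ n < N, (G n).1)).1 :=
      orthoSub_topologicalClosure_right.2 <| orthoSub_iff_le_orthogonal.2 <|
        iSup₂_le fun n hn => orthoSub_iff_le_orthogonal.1 (hG N n hn.ne')
    rw [Finset.sum_range_succ, ← ih, add_comm _ (s (G N)), ← hs _ _ horth, Nat.iSup_lt_succ,
      sup_comm]
    exact congrArg s (Subtype.ext (topologicalClosure_sup_topologicalClosure_right _ _).symm)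

theorem IsState.isOrthoAdditive (hs : IsState s) : IsOrthoAdditive s := by
  intro P Q hPQ
  let G : ℕ → ClosedSubspace E := fun | 0 => P | 1 => Q | _ => csBot
  have hG : ∀ m n, m ≠ n → OrthoSub (G m).1 (G n).1 := by
    rintro (_ | _ | m) (_ | _ | n) hmn <;>
      simp_all [G, csBot, orthoSub_bot_left, orthoSub_bot_right, hPQ.symm]
  have hsup : ⨆ n, (G n).1 = P.1 ⊔ Q.1 :=
    le_antisymm (iSup_le fun | 0 => le_sup_left | 1 => le_sup_right | _ + 2 => bot_le)
      (sup_le (le_iSup (fun n => (G n).1) 0) (le_iSup (fun n => (G n).1) 1))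
  rw [← hsup, csClosure, hs.2.2.2 G hG, tsum_eq_sum (s := Finset.range 2)]
  · simp [G, Finset.sum_range_succ]
  · rintro (_ | _ | n) hn <;> simp_all [G, hs.2.1]

theorem IsState.apply_csClosure_sup_iSup (hs : IsState s) {Q : ClosedSubspace E}
    {D : ℕ → ClosedSubspace E} (hD : ∀ m n, m ≠ n → OrthoSub (D m).1 (D n).1)
    (hQD : ∀ k, OrthoSub Q.1 (D k).1) :
    s (csClosure (Q.1 ⊔ ⨆ k, (D k).1)) = s Q + ∑' k, s (D k) := by
  have hQ : OrthoSub Q.1 (csClosure (⨆ k, (D k).1)).1 :=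
    orthoSub_topologicalClosure_right.2 <| orthoSub_iff_le_orthogonal.2 <|
      iSup_le fun k => orthoSub_iff_le_orthogonal.1 (hQD k)
  have hsum : s (csClosure (⨆ k, (D k).1)) = ∑' k, s (D k) := hs.2.2.2 D hD
  rw [← hsum, ← hs.isOrthoAdditive Q _ hQ]
  exact congrArg s (Subtype.ext (topologicalClosure_sup_topologicalClosure_right _ _).symm)

end

theorem topologicalClosure_csIInf_sup_iSup_csDiff {P : ℕ → ClosedSubspace H}
    (hP : Antitone fun n => (P n).1) (N : ℕ) :
    ((csIInf P).1 ⊔ ⨆ k, (csDiff (P (k + N)) (P (k + N + 1))).1).topologicalClosure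
      = (P N).1 := by
  set W := (csIInf P).1 ⊔ ⨆ k, (csDiff (P (k + N)) (P (k + N + 1))).1
  have hle : W.topologicalClosure ≤ (P N).1 :=
    W.topologicalClosure_minimal
      (sup_le (iInf_le _ N)
        (iSup_le fun k => inf_le_right.trans (hP (Nat.le_add_left N k)))) (P N).2
  have hbot : W.topologicalClosureᗮ ⊓ (P N).1 = ⊥ := by
    refine eq_bot_iff.2 fun x ⟨hxW, hxN⟩ => ?_
    rw [orthogonal_closure, ← inf_orthogonal] at hxW
    have hx_tail : ∀ k, x ∈ (P (k + N)).1 := by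
      intro k
      induction k with
      | zero => rwa [zero_add]
      | succ k ih =>
        rw [Nat.add_right_comm]
        exact mem_of_mem_orthogonal_inf (hP (Nat.le_succ _)) ih
          (orthogonal_le (le_iSup (fun k => (csDiff (P (k + N)) (P (k + N + 1))).1) k) hxW.2)
    have hx_inf : x ∈ (csIInf P).1 :=
      mem_iInf _ |>.2 fun n => hP (Nat.le_add_right n N) (hx_tail n)
    exact (mem_bot ℂ).2 (inner_self_eq_zero.1 (hxW.1 x hx_inf))
  have h := sup_orthogonal_inf_of_hasOrthogonalProjection hle
  rwa [hbot, sup_bot_eq] at h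

section

variable {s : ClosedSubspace H → ℝ}

theorem IsOrthoAdditive.apply_eq_add_csDiff (hs : IsOrthoAdditive s) {A B : ClosedSubspace H}
    (hAB : A.1 ≤ B.1) : s B = s A + s (csDiff B A) := by
  rw [← hs A (csDiff B A) (orthoSub_iff_le_orthogonal.2 inf_le_left)]
  refine congrArg s (Subtype.ext ?_)
  change B.1 = (A.1 ⊔ A.1ᗮ ⊓ B.1).topologicalClosure
  rw [sup_orthogonal_inf_of_hasOrthogonalProjection hAB, B.2.submodule_topologicalClosure_eq]

theorem IsOrthoAdditive.mono (hs : IsOrthoAdditive s) (hnonneg : ∀ P, 0 ≤ s P)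
    {A B : ClosedSubspace H} (hAB : A.1 ≤ B.1) : s A ≤ s B := by
  rw [hs.apply_eq_add_csDiff hAB]
  exact le_add_of_nonneg_right (hnonneg _)

theorem IsOrthoAdditive.hasSum (hs : IsOrthoAdditive s) (hnonneg : ∀ P, 0 ≤ s P)
    (hbot : s csBot = 0) (hcont : IsContinuousFromAbove s) {G : ℕ → ClosedSubspace H}
    (hG : ∀ m n, m ≠ n → OrthoSub (G m).1 (G n).1) :
    HasSum (fun n => s (G n)) (s (csClosure (⨆ n, (G n).1))) := by
  set T := csClosure (⨆ n, (G n).1)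
  let S : ℕ → ClosedSubspace H := fun N => csClosure (⨆ n < N, (G n).1)
  let R : ℕ → ClosedSubspace H := fun N => csDiff T (S N)
  have hS_mono : Monotone fun N => (S N).1 := fun a b hab =>
    topologicalClosure_mono (biSup_mono fun n hn => hn.trans_le hab)
  have hST : ∀ N, (S N).1 ≤ T.1 := fun N =>
    topologicalClosure_mono (iSup₂_le fun n _ => le_iSup (fun n => (G n).1) n)
  have hsplit : ∀ N, s T = ∑ n ∈ Finset.range N, s (G n) + s (R N) := fun N => by
    rw [← hs.apply_csClosure_biSup hbot hG N]
    exact hs.apply_eq_add_csDiff (hST N)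
  have hR_anti : Antitone fun N => (R N).1 := fun a b hab =>
    inf_le_inf_right _ (orthogonal_le (hS_mono hab))
  have hR_inf : (csIInf R).1 = ⊥ := by
    refine eq_bot_iff.2 ?_
    have hGS : (⨆ n, (G n).1) ≤ ⨆ N, (S N).1 := iSup_le fun n =>
      (le_iSup₂ (f := fun k (_ : k < n + 1) => (G k).1) n n.lt_succ_self).trans
        ((le_topologicalClosure _).trans (le_iSup (fun N => (S N).1) (n + 1)))
    calc ⨅ N, (S N).1ᗮ ⊓ T.1 = (⨆ N, (S N).1)ᗮ ⊓ T.1 := by rw [← iInf_inf, iInf_orthogonal]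
      _ ≤ T.1ᗮ ⊓ T.1 := by
        gcongr
        rw [show T.1ᗮ = (⨆ n, (G n).1)ᗮ from orthogonal_closure _]
        exact orthogonal_le hGS
      _ = ⊥ := by rw [inf_comm, inf_orthogonal_eq_bot]
  have hR_lim : Tendsto (fun N => s (R N)) atTop (𝓝 0) := by
    have h := tendsto_atTop_ciInf (fun a b hab => hs.mono hnonneg (hR_anti hab))
      ⟨0, Set.forall_mem_range.2 fun N => hnonneg (R N)⟩
    rwa [← hcont R fun n => hR_anti n.le_succ, show csIInf R = csBot from Subtype.ext hR_inf,
      hbot] at h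
  rw [hasSum_iff_tendsto_nat_of_nonneg fun n => hnonneg _]
  have h := (tendsto_const_nhds (x := s T)).sub hR_lim
  rw [sub_zero] at h
  exact h.congr fun N => by rw [hsplit N, add_sub_cancel_right]

theorem IsState.isContinuousFromAbove (hs : IsState s) : IsContinuousFromAbove s := by
  intro P hP
  have hanti : Antitone fun n => (P n).1 := antitone_nat_of_succ_le hP
  let D : ℕ → ClosedSubspace H := fun k => csDiff (P k) (P (k + 1))
  have hD_lt : ∀ m n, m < n → OrthoSub (D n).1 (D m).1 := fun m n hmn =>
    orthoSub_iff_le_orthogonal.2 <|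
      inf_le_left.trans (orthogonal_le (inf_le_right.trans (hanti hmn)))
  have hD : ∀ m n, m ≠ n → OrthoSub (D m).1 (D n).1 := fun m n hmn =>
    hmn.lt_or_gt.elim (fun h => (hD_lt m n h).symm) (hD_lt n m)
  have hQD : ∀ k, OrthoSub (csIInf P).1 (D k).1 := fun k =>
    orthoSub_iff_le_orthogonal.2 (inf_le_left.trans (orthogonal_le (iInf_le _ (k + 1))))
  have hsplit : ∀ N, s (P N) = s (csIInf P) + ∑' k, s (D (k + N)) := fun N => by
    rw [← hs.apply_csClosure_sup_iSup (fun m n hmn => hD _ _ (by omega)) fun k => hQD (k + N)]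
    exact congrArg s (Subtype.ext (topologicalClosure_csIInf_sup_iSup_csDiff hanti N).symm)
  have hlim : Tendsto (fun N => s (P N)) atTop (𝓝 (s (csIInf P))) := by
    have h := (tendsto_sum_nat_add fun k => s (D k)).const_add (s (csIInf P))
    rw [add_zero] at h
    exact h.congr fun N => (hsplit N).symm
  exact tendsto_nhds_unique hlim <| tendsto_atTop_ciInf
    (fun a b hab => hs.isOrthoAdditive.mono (fun P => (hs.1 P).1) (hanti hab))
    ⟨0, Set.forall_mem_range.2 fun N => (hs.1 (P N)).1⟩

end

/-- Characterization of states: a `[0,1]`-valued map on the closed subspaces of a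
separable infinite-dimensional complex Hilbert space is a state iff it satisfies
(S1) `s ⊥ = 0`, `s ⊤ = 1`; (S2) `s` sends intersections of decreasing sequences to
infima; (S3) finite additivity on orthogonal pairs. -/
theorem isState_iff_S1_S2_S3
    (s : ClosedSubspace H → ℝ) (hrange : ∀ P, s P ∈ Set.Icc (0 : ℝ) 1) :
    IsState s ↔
      ((s csBot = 0 ∧ s csTop = 1) ∧
       (∀ P : ℕ → ClosedSubspace H, (∀ n, (P (n + 1)).1 ≤ (P n).1) →
          s ⟨⨅ n, (P n).1, by
              rw [Submodule.coe_iInf]; exact isClosed_iInter fun n => (P n).2⟩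
            = ⨅ n, s (P n)) ∧
       (∀ P Q : ClosedSubspace H, OrthoSub P.1 Q.1 →
          s ⟨(P.1 ⊔ Q.1).topologicalClosure, Submodule.isClosed_topologicalClosure _⟩
            = s P + s Q)) := by
  refine ⟨fun hs => ⟨⟨hs.2.1, hs.2.2.1⟩, hs.isContinuousFromAbove, hs.isOrthoAdditive⟩, ?_⟩
  rintro ⟨⟨hbot, htop⟩, hcont, hadd⟩
  exact ⟨hrange, hbot, htop, fun G hG =>
    ((IsOrthoAdditive.hasSum hadd (fun P => (hrange P).1) hbot hcont hG).tsum_eq).symm⟩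
end
end

section
/- Let H be a separable infinite-dimensional complex Hilbert space and let ν be a function from the closed subsets of ℝ to the closed subspaces of H satisfying: (O1) ν(∅) = ⊥ and ν(ℝ) = ⊤; (O2) for every decreasing sequence (C_n) of closed subsets of ℝ (C_{n+1} ⊆ C_n for all n), ν(⋂_n C_n) is the intersection of the closed subspaces ν(C_n); (O3) for every unit vector x ∈ H and all closed subsets A, B of ℝ, ν_x(A) + ν_x(B) = ν_x(A ∪ B) + ν_x(A ∩ B), where ν_x(C) = re⟪x, proj_{ν(C)} x⟫. Then there exists a unique observable o on H such that o(C) = ν(C) for every closed subset C of ℝ. -/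
open scoped InnerProductSpace

noncomputable section

variable {H : Type*} [NormedAddCommGroup H] [InnerProductSpace ℂ H] [CompleteSpace H]

/-! The observable is the inner regularisation `o(X) = closure (⨆ {ν(C) | C ⊆ X closed})`.
By (O3), for every `x` the map `C ↦ ‖proj_{ν(C)} x‖²` is modular, and by (O2) it is continuous
along decreasing sequences, so on compact sets it is a regular content; its measure `μ_x` agrees
with it on compacts. The only nontrivial observable axiom is σ-additivity: if `y` is orthogonal to
every `o(X n)`, then `μ_y` vanishes on the compact subsets of each `X n`, hence on `⋃ n, X n` by
inner regularity, so `y ⊥ ν(C)` for every closed `C ⊆ ⋃ n, X n`. Uniqueness follows from the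
π-λ theorem, since every observable satisfies `o(Xᶜ) = o(X)ᗮ`. -/

open Filter Topology MeasureTheory TopologicalSpace
open scoped NNReal

local notation "ClosedSet" => {C : Set ℝ // IsClosed C}
local notation "BorelSet" => {X : Set ℝ // MeasurableSet X}

theorem Submodule.starProjection_tendsto_iInf {𝕜 E ι : Type*} [RCLike 𝕜] [NormedAddCommGroup E]
    [InnerProductSpace 𝕜 E] [CompleteSpace E] [Preorder ι] (K : ι → Submodule 𝕜 E)
    [∀ i, (K i).HasOrthogonalProjection] [(⨅ i, K i).HasOrthogonalProjection] (hK : Antitone K)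
    (x : E) :
    Tendsto (fun i => (K i).starProjection x) atTop (𝓝 ((⨅ i, K i).starProjection x)) := by
  have hcompl : (⨆ i, (K i)ᗮ).topologicalClosure = (⨅ i, K i)ᗮ := by
    rw [← Submodule.orthogonal_orthogonal_eq_closure, ← Submodule.iInf_orthogonal]
    simp only [Submodule.orthogonal_orthogonal]
  have hmono : Monotone fun i => (K i)ᗮ := fun i j hij => Submodule.orthogonal_le (hK hij)
  simpa only [hcompl, Submodule.starProjection_orthogonal_val, sub_sub_cancel] using
    (Submodule.starProjection_tendsto_closure_iSup _ hmono x).const_sub x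

section

variable {H : Type*} [NormedAddCommGroup H] [InnerProductSpace ℂ H]

namespace QuantumValuation

variable (ν : ClosedSet → ClosedSubspace H)

def Normalized : Prop :=
  ν ⟨∅, isClosed_empty⟩ = csBot ∧ ν ⟨Set.univ, isClosed_univ⟩ = csTop

def IInterContinuous : Prop :=
  ∀ C : ℕ → ClosedSet, (∀ n, (C (n + 1)).1 ⊆ (C n).1) →
    ν ⟨⋂ n, (C n).1, isClosed_iInter fun n => (C n).2⟩
      = ⟨⨅ n, (ν (C n)).1, by
          rw [Submodule.coe_iInf]; exact isClosed_iInter fun n => (ν (C n)).2⟩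

def innerReg (X : BorelSet) : ClosedSubspace H :=
  ⟨(⨆ (C : ClosedSet) (_ : C.1 ⊆ X.1), (ν C).1).topologicalClosure,
    Submodule.isClosed_topologicalClosure _⟩

variable {ν}

theorem IInterContinuous.mono (h2 : IInterContinuous ν) {A B : ClosedSet} (hAB : A.1 ⊆ B.1) :
    (ν A).1 ≤ (ν B).1 := by
  let C : ℕ → ClosedSet := fun n => if n = 0 then B else A
  have hdec : ∀ n, (C (n + 1)).1 ⊆ (C n).1 := by
    rintro (_ | n) <;> simp [C, hAB]
  have hA : (⟨⋂ n, (C n).1, isClosed_iInter fun n => (C n).2⟩ : ClosedSet) = A :=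
    Subtype.ext <| (Set.iInter_subset _ 1).antisymm <| Set.subset_iInter fun n => by
      rcases n with _ | n <;> simp [C, hAB]
  have h := congrArg Subtype.val (h2 C hdec)
  rw [hA] at h
  rw [h]
  exact iInf_le (fun n => (ν (C n)).1) 0

theorem le_innerReg {X : BorelSet} {C : ClosedSet} (hCX : C.1 ⊆ X.1) :
    (ν C).1 ≤ (innerReg ν X).1 :=
  (le_biSup (fun C => (ν C).1) hCX).trans (Submodule.le_topologicalClosure _)

theorem innerReg_le_iff {X : BorelSet} {P : Submodule ℂ H} (hP : IsClosed (P : Set H)) :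
    (innerReg ν X).1 ≤ P ↔ ∀ C : ClosedSet, C.1 ⊆ X.1 → (ν C).1 ≤ P :=
  ⟨fun h _ hCX => (le_innerReg hCX).trans h,
    fun h => Submodule.topologicalClosure_minimal _ (iSup₂_le h) hP⟩

theorem innerReg_mono {X Y : BorelSet} (hXY : X.1 ⊆ Y.1) :
    (innerReg ν X).1 ≤ (innerReg ν Y).1 :=
  (innerReg_le_iff (innerReg ν Y).2).2 fun _ hCX => le_innerReg (hCX.trans hXY)

theorem innerReg_of_isClosed (h2 : IInterContinuous ν) (C : ClosedSet) :
    innerReg ν ⟨C.1, C.2.measurableSet⟩ = ν C :=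
  Subtype.ext <| le_antisymm ((innerReg_le_iff (ν C).2).2 fun _ hD => h2.mono hD)
    (le_innerReg subset_rfl)

theorem innerReg_isOrtho_of_forall {X : BorelSet} {P : Submodule ℂ H}
    (h : ∀ C : ClosedSet, C.1 ⊆ X.1 → (ν C).1 ⟂ P) : (innerReg ν X).1 ⟂ P :=
  Submodule.isOrtho_iff_le.2 <| (innerReg_le_iff P.isClosed_orthogonal).2 fun C hC =>
    Submodule.isOrtho_iff_le.1 (h C hC)

end QuantumValuation

end

instance (P : ClosedSubspace H) : CompleteSpace P.1 := P.2.completeSpace_coe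

theorem cproj_eq_starProjection (P : ClosedSubspace H) (x : H) :
    cproj P x = P.1.starProjection x := rfl

theorem re_inner_cproj_self (P : ClosedSubspace H) (x : H) :
    (⟪x, cproj P x⟫_ℂ).re = ‖cproj P x‖ ^ 2 := by
  rw [← inner_conj_symm, Complex.conj_re, cproj_eq_starProjection,
    ← RCLike.re_to_complex, Submodule.re_inner_starProjection_eq_normSq]
  rfl

theorem cproj_csBot (x : H) : cproj csBot x = 0 := by
  simp [cproj_eq_starProjection, csBot, Submodule.starProjection_bot]

theorem norm_cproj_le_of_le {P Q : ClosedSubspace H} (h : P.1 ≤ Q.1) (x : H) :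
    ‖cproj P x‖ ≤ ‖cproj Q x‖ := by
  simp only [cproj_eq_starProjection]
  rw [← Submodule.starProjection_comp_starProjection_of_le h]
  exact P.1.norm_starProjection_apply_le _

theorem norm_cproj_le (P : ClosedSubspace H) (x : H) : ‖cproj P x‖ ≤ ‖x‖ :=
  P.1.norm_starProjection_apply_le x

namespace QuantumValuation

variable (ν : ClosedSet → ClosedSubspace H)

def Modular : Prop :=
  ∀ x : H, ‖x‖ = 1 → ∀ A B : ClosedSet,
    (⟪x, cproj (ν A) x⟫_ℂ).re + (⟪x, cproj (ν B) x⟫_ℂ).re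
    = (⟪x, cproj (ν ⟨A.1 ∪ B.1, A.2.union B.2⟩) x⟫_ℂ).re
      + (⟪x, cproj (ν ⟨A.1 ∩ B.1, A.2.inter B.2⟩) x⟫_ℂ).re

/-- The paper's `ν_x(C) = re ⟪x, proj_{ν(C)} x⟫`, written as `‖proj_{ν(C)} x‖²` and taken for
all `x`, not only unit vectors. -/
def mass (x : H) (C : ClosedSet) : ℝ≥0 := ‖cproj (ν C) x‖₊ ^ 2

variable {ν}

theorem mass_mono (h2 : IInterContinuous ν) (x : H) {A B : ClosedSet} (hAB : A.1 ⊆ B.1) :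
    mass ν x A ≤ mass ν x B := by
  unfold mass
  gcongr
  exact norm_cproj_le_of_le (h2.mono hAB) x

theorem mass_le (x : H) (C : ClosedSet) : mass ν x C ≤ ‖x‖₊ ^ 2 := by
  unfold mass
  gcongr
  exact norm_cproj_le _ x

theorem mass_of_mem {x : H} {C : ClosedSet} (hx : x ∈ (ν C).1) :
    mass ν x C = ‖x‖₊ ^ 2 := by
  rw [mass, cproj_eq_starProjection, Submodule.starProjection_eq_self_iff.2 hx]

theorem mass_eq_zero_iff {x : H} {C : ClosedSet} :
    mass ν x C = 0 ↔ x ∈ (ν C).1ᗮ := by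
  rw [mass, pow_eq_zero_iff two_ne_zero, nnnorm_eq_zero, cproj_eq_starProjection,
    Submodule.starProjection_apply_eq_zero_iff]

theorem mass_of_eq_empty (h1 : Normalized ν) (x : H) {C : ClosedSet}
    (hC : C.1 = ∅) : mass ν x C = 0 := by
  obtain rfl : C = ⟨∅, isClosed_empty⟩ := Subtype.ext hC
  simp [mass, h1.1, cproj_csBot]

theorem mass_smul (c : ℂ) (x : H) (C : ClosedSet) :
    mass ν (c • x) C = ‖c‖₊ ^ 2 * mass ν x C := by
  simp only [mass, cproj_eq_starProjection, map_smul, nnnorm_smul, mul_pow]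

theorem mass_union_add_mass_inter (h3 : Modular ν) (x : H) (A B : ClosedSet) :
    mass ν x ⟨A.1 ∪ B.1, A.2.union B.2⟩ + mass ν x ⟨A.1 ∩ B.1, A.2.inter B.2⟩
      = mass ν x A + mass ν x B := by
  obtain rfl | hx := eq_or_ne x 0
  · simp [mass, cproj_eq_starProjection]
  set u : H := (‖x‖⁻¹ : ℂ) • x
  have hu : ‖u‖ = 1 := by
    simp [u, norm_smul, hx]
  have hxu : x = (‖x‖ : ℂ) • u := by
    simp [u, smul_smul, hx]
  have h := h3 u hu A B
  simp only [re_inner_cproj_self] at h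
  rw [hxu]
  simp only [mass_smul, ← mul_add]
  congr 1
  apply NNReal.coe_injective
  push_cast [mass]
  linarith

theorem mass_union_of_disjoint (h1 : Normalized ν) (h3 : Modular ν) (x : H)
    {A B : ClosedSet} (hAB : A.1 ∩ B.1 = ∅) :
    mass ν x ⟨A.1 ∪ B.1, A.2.union B.2⟩ = mass ν x A + mass ν x B := by
  rw [← mass_union_add_mass_inter h3, mass_of_eq_empty h1 x (C := ⟨_, A.2.inter B.2⟩) hAB,
    add_zero]

theorem mass_union_le (h3 : Modular ν) (x : H) (A B : ClosedSet) :
    mass ν x ⟨A.1 ∪ B.1, A.2.union B.2⟩ ≤ mass ν x A + mass ν x B :=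
  (mass_union_add_mass_inter h3 x A B).le.trans' le_self_add

theorem isOrtho_of_disjoint (h1 : Normalized ν) (h3 : Modular ν) {A B : ClosedSet}
    (hAB : A.1 ∩ B.1 = ∅) : (ν A).1 ⟂ (ν B).1 := by
  refine Submodule.isOrtho_iff_le.2 fun x hx => mass_eq_zero_iff.1 ?_
  have h := mass_union_of_disjoint h1 h3 x hAB
  rw [mass_of_mem hx] at h
  have := mass_le (ν := ν) x ⟨A.1 ∪ B.1, A.2.union B.2⟩
  rw [h] at this
  simpa using this

theorem tendsto_mass_iInter (h2 : IInterContinuous ν) (x : H) (C : ℕ → ClosedSet)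
    (hC : ∀ n, (C (n + 1)).1 ⊆ (C n).1) :
    Tendsto (fun n => mass ν x (C n)) atTop
      (𝓝 (mass ν x ⟨⋂ n, (C n).1, isClosed_iInter fun n => (C n).2⟩)) := by
  have hanti : Antitone fun n => (ν (C n)).1 :=
    antitone_nat_of_succ_le fun n => h2.mono (hC n)
  have : IsClosed ((⨅ n, (ν (C n)).1 : Submodule ℂ H) : Set H) := by
    rw [Submodule.coe_iInf]
    exact isClosed_iInter fun n => (ν (C n)).2
  simp only [mass, h2 C hC, cproj_eq_starProjection]
  exact ((continuous_pow 2).tendsto _).comp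
    (Submodule.starProjection_tendsto_iInf _ hanti x).nnnorm

def content (h1 : Normalized ν) (h2 : IInterContinuous ν) (h3 : Modular ν) (x : H) :
    Content ℝ where
  toFun K := mass ν x ⟨K, K.isCompact.isClosed⟩
  mono' _ _ h := mass_mono h2 x h
  sup_disjoint' K₁ K₂ h _ _ := mass_union_of_disjoint h1 h3 x
    (A := ⟨K₁, K₁.isCompact.isClosed⟩) (B := ⟨K₂, K₂.isCompact.isClosed⟩)
    (Set.disjoint_iff_inter_eq_empty.1 h)
  sup_le' K₁ K₂ :=
    mass_union_le h3 x ⟨K₁, K₁.isCompact.isClosed⟩ ⟨K₂, K₂.isCompact.isClosed⟩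

theorem contentRegular (h1 : Normalized ν) (h2 : IInterContinuous ν) (h3 : Modular ν) (x : H) :
    (content h1 h2 h3 x).ContentRegular := by
  intro K
  refine le_antisymm (le_iInf₂ fun K' hK' => (content h1 h2 h3 x).mono _ _
    (hK'.trans interior_subset)) ?_
  let D : ℕ → Compacts ℝ := fun n =>
    ⟨Metric.cthickening (1 / (n + 1)) K, K.isCompact.cthickening⟩
  have hD : ∀ n, (D (n + 1) : Set ℝ) ⊆ D n := fun n => Metric.cthickening_mono
    (one_div_le_one_div_of_le (by positivity) (by push_cast; linarith)) _
  have hDK : ⋂ n, (D n : Set ℝ) = K := by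
    rw [← K.isCompact.isClosed.closure_eq, Metric.closure_eq_iInter_cthickening' _
      (Set.range fun n : ℕ => 1 / ((n : ℝ) + 1)), Set.biInter_range]
    · rfl
    intro ε hε
    obtain ⟨n, hn⟩ := exists_nat_one_div_lt hε
    exact ⟨_, ⟨n, rfl⟩, by positivity, hn.le⟩
  have hlim := tendsto_mass_iInter h2 x (fun n => ⟨D n, (D n).isCompact.isClosed⟩) hD
  simp only [hDK] at hlim
  refine ge_of_tendsto' (ENNReal.tendsto_coe.2 hlim) fun n => iInf₂_le (D n) ?_
  exact (Metric.self_subset_thickening (by positivity) _).trans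
    (interior_maximal (Metric.thickening_subset_cthickening _ _) Metric.isOpen_thickening)

theorem measure_content_of_isCompact (h1 : Normalized ν) (h2 : IInterContinuous ν)
    (h3 : Modular ν) (x : H) {K : Set ℝ} (hK : IsCompact K) :
    (content h1 h2 h3 x).measure K = mass ν x ⟨K, hK.isClosed⟩ :=
  Content.measure_eq_content_of_regular _ (contentRegular h1 h2 h3 x) ⟨K, hK⟩

theorem tendsto_mass_diff_Ioo (h1 : Normalized ν) (h2 : IInterContinuous ν) (x : H)
    (C : ClosedSet) :
    Tendsto (fun n : ℕ => mass ν x ⟨C.1 \ Set.Ioo (-n) n, C.2.sdiff isOpen_Ioo⟩) atTop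
      (𝓝 0) := by
  let D : ℕ → ClosedSet := fun n => ⟨C.1 \ Set.Ioo (-n) n, C.2.sdiff isOpen_Ioo⟩
  have hdec : ∀ n, (D (n + 1)).1 ⊆ (D n).1 := fun n =>
    Set.sdiff_subset_sdiff_right (Set.Ioo_subset_Ioo (by simp) (by simp))
  have hempty : ⋂ n, (D n).1 = ∅ := by
    refine Set.eq_empty_of_forall_notMem fun t ht => ?_
    obtain ⟨n, hn⟩ := exists_nat_gt |t|
    exact (Set.mem_iInter.1 ht n).2 ⟨by linarith [neg_abs_le t], by linarith [le_abs_self t]⟩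
  have := tendsto_mass_iInter h2 x D hdec
  rwa [mass_of_eq_empty h1 x hempty] at this

theorem mass_eq_zero_of_measure_eq_zero (h1 : Normalized ν) (h2 : IInterContinuous ν)
    (h3 : Modular ν) {x : H} {C : ClosedSet}
    (hC : (content h1 h2 h3 x).measure C.1 = 0) : mass ν x C = 0 := by
  -- The measure only sees compact sets: split `C` into `C ∩ [-n, n]` and `C \ (-n, n)`.
  refine nonpos_iff_eq_zero.1 (ge_of_tendsto' (tendsto_mass_diff_Ioo h1 h2 x C) fun n => ?_)
  let K : ClosedSet := ⟨C.1 ∩ Set.Icc (-n) n, C.2.inter isClosed_Icc⟩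
  let D : ClosedSet := ⟨C.1 \ Set.Ioo (-n) n, C.2.sdiff isOpen_Ioo⟩
  have hK : mass ν x K = 0 := by
    have := measure_content_of_isCompact h1 h2 h3 x
      ((isCompact_Icc (a := -(n : ℝ)) (b := n)).inter_left C.2)
    rw [measure_mono_null Set.inter_subset_left hC] at this
    exact ENNReal.coe_eq_zero.1 this.symm
  have hCKD : C.1 ⊆ K.1 ∪ D.1 := fun t ht => by
    by_cases htI : t ∈ Set.Ioo (-(n : ℝ)) n
    · exact Or.inl ⟨ht, Set.Ioo_subset_Icc_self htI⟩
    · exact Or.inr ⟨ht, htI⟩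
  calc mass ν x C ≤ mass ν x ⟨K.1 ∪ D.1, K.2.union D.2⟩ := mass_mono h2 x hCKD
    _ ≤ mass ν x K + mass ν x D := mass_union_le h3 x K D
    _ = mass ν x D := by rw [hK, zero_add]

theorem innerReg_isOrtho (h1 : Normalized ν) (h3 : Modular ν) {X Y : BorelSet}
    (hXY : X.1 ∩ Y.1 = ∅) : (innerReg ν X).1 ⟂ (innerReg ν Y).1 :=
  innerReg_isOrtho_of_forall fun C hCX => .symm <| innerReg_isOrtho_of_forall fun D hDY =>
    isOrtho_of_disjoint h1 h3 <| Set.subset_eq_empty (Set.inter_subset_inter hDY hCX)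
      (by rw [Set.inter_comm, hXY])

theorem le_closure_iSup_innerReg (h1 : Normalized ν) (h2 : IInterContinuous ν) (h3 : Modular ν)
    (X : ℕ → BorelSet) {C : ClosedSet}
    (hC : C.1 ⊆ ⋃ n, (X n).1) :
    (ν C).1 ≤ (⨆ n, (innerReg ν (X n)).1).topologicalClosure := by
  set T : ClosedSubspace H :=
    ⟨(⨆ n, (innerReg ν (X n)).1).topologicalClosure, Submodule.isClosed_topologicalClosure _⟩
  suffices T.1ᗮ ≤ (ν C).1ᗮ by
    simpa only [Submodule.orthogonal_orthogonal] using Submodule.orthogonal_le this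
  intro y hy
  let μ := (content h1 h2 h3 y).measure
  have hXn : ∀ n, μ (X n).1 = 0 := fun n => by
    rw [(X n).2.measure_eq_iSup_isCompact]
    simp only [ENNReal.iSup_eq_zero]
    intro K hKX hK
    rw [measure_content_of_isCompact h1 h2 h3 y hK, ENNReal.coe_eq_zero, mass_eq_zero_iff]
    exact Submodule.orthogonal_le ((le_innerReg hKX).trans
      ((le_iSup (fun n => (innerReg ν (X n)).1) n).trans (Submodule.le_topologicalClosure _))) hy
  exact mass_eq_zero_iff.1 (mass_eq_zero_of_measure_eq_zero h1 h2 h3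
    (measure_mono_null hC (measure_iUnion_null hXn)))

theorem innerReg_iUnion (h1 : Normalized ν) (h2 : IInterContinuous ν) (h3 : Modular ν)
    (X : ℕ → BorelSet) :
    innerReg ν ⟨⋃ n, (X n).1, MeasurableSet.iUnion fun n => (X n).2⟩
      = ⟨(⨆ n, (innerReg ν (X n)).1).topologicalClosure,
          Submodule.isClosed_topologicalClosure _⟩ :=
  Subtype.ext <| le_antisymm
    ((innerReg_le_iff (Submodule.isClosed_topologicalClosure _)).2 fun _ hC =>
      le_closure_iSup_innerReg h1 h2 h3 X hC)
    (Submodule.topologicalClosure_minimal _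
      (iSup_le fun n => innerReg_mono (Set.subset_iUnion (fun n => (X n).1) n)) (innerReg _ _).2)

theorem isObservable_innerReg (h1 : Normalized ν) (h2 : IInterContinuous ν) (h3 : Modular ν) :
    IsObservable (innerReg ν) :=
  ⟨(innerReg_of_isClosed h2 ⟨∅, isClosed_empty⟩).trans h1.1,
    (innerReg_of_isClosed h2 ⟨Set.univ, isClosed_univ⟩).trans h1.2,
    innerReg_iUnion h1 h2 h3,
    fun _ _ hXY => Submodule.isOrtho_iff_inner_eq.1 (innerReg_isOrtho h1 h3 hXY)⟩

end QuantumValuation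

namespace IsObservable

variable {o o' : BorelSet → ClosedSubspace H}

theorem compl (ho : IsObservable o) (X : BorelSet) :
    (o ⟨X.1ᶜ, X.2.compl⟩).1 = (o X).1ᗮ := by
  let Y : ℕ → BorelSet := fun n => if n = 0 then X else ⟨X.1ᶜ, X.2.compl⟩
  have hY : (⟨⋃ n, (Y n).1, MeasurableSet.iUnion fun n => (Y n).2⟩ :
      BorelSet) = ⟨Set.univ, MeasurableSet.univ⟩ := by
    refine Subtype.ext (Set.eq_univ_of_forall fun t => ?_)
    by_cases ht : t ∈ X.1
    · exact Set.mem_iUnion.2 ⟨0, ht⟩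
    · exact Set.mem_iUnion.2 ⟨1, ht⟩
  have hdense : (⊤ : Submodule ℂ H) = (⨆ n, (o (Y n)).1).topologicalClosure := by
    have := congrArg Subtype.val (ho.2.2.1 Y)
    rwa [hY, ho.2.1] at this
  have hle : ⨆ n, (o (Y n)).1 ≤ (o X).1 ⊔ (o ⟨X.1ᶜ, X.2.compl⟩).1 := iSup_le fun n => by
    rcases n with _ | n
    · exact le_sup_left
    · exact le_sup_right
  have hbot : ((o X).1 ⊔ (o ⟨X.1ᶜ, X.2.compl⟩).1)ᗮ = ⊥ := by
    refine eq_bot_iff.2 ((Submodule.orthogonal_le hle).trans ?_)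
    rw [← Submodule.orthogonal_closure, ← hdense, Submodule.top_orthogonal_eq_bot]
  have hortho : (o ⟨X.1ᶜ, X.2.compl⟩).1 ≤ (o X).1ᗮ := Submodule.isOrtho_iff_le.1
    (Submodule.isOrtho_iff_inner_eq.2 (ho.2.2.2 X _ (Set.inter_compl_self _))).symm
  have := Submodule.sup_orthogonal_inf_of_hasOrthogonalProjection hortho
  rwa [Submodule.inf_orthogonal, sup_comm _ (o X).1, hbot, sup_bot_eq] at this

theorem ext_of_isClosed (ho : IsObservable o) (ho' : IsObservable o')
    (h : ∀ C : ClosedSet, o ⟨C.1, C.2.measurableSet⟩ = o' ⟨C.1, C.2.measurableSet⟩) :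
    o = o' := by
  funext ⟨X, hX⟩
  induction X, hX using MeasurableSpace.induction_on_inter borel_eq_generateFrom_isClosed
    isPiSystem_isClosed with
  | empty => exact ho.1.trans ho'.1.symm
  | basic C hC => exact h ⟨C, hC⟩
  | compl X hX ih => exact Subtype.ext (by rw [ho.compl ⟨X, hX⟩, ho'.compl ⟨X, hX⟩, ih])
  | iUnion X _ hX ih =>
    rw [ho.2.2.1 fun n => ⟨X n, hX n⟩, ho'.2.2.1 fun n => ⟨X n, hX n⟩]
    simp only [ih]

end IsObservable

/-- A quantum valuation on the closed subsets of `ℝ` (conditions (O1), (O2), (O3))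
extends uniquely to an observable. -/
theorem quantum_valuation_extends_uniquely_to_observable
    (ν : {C : Set ℝ // IsClosed C} → ClosedSubspace H)
    (hO1 : ν ⟨∅, isClosed_empty⟩ = csBot ∧ ν ⟨Set.univ, isClosed_univ⟩ = csTop)
    (hO2 : ∀ C : ℕ → {C : Set ℝ // IsClosed C}, (∀ n, (C (n + 1)).1 ⊆ (C n).1) →
       ν ⟨⋂ n, (C n).1, isClosed_iInter fun n => (C n).2⟩
         = ⟨⨅ n, (ν (C n)).1, by
             rw [Submodule.coe_iInf]; exact isClosed_iInter fun n => (ν (C n)).2⟩)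
    (hO3 : ∀ x : H, ‖x‖ = 1 → ∀ A B : {C : Set ℝ // IsClosed C},
       (⟪x, cproj (ν A) x⟫_ℂ).re + (⟪x, cproj (ν B) x⟫_ℂ).re
       = (⟪x, cproj (ν ⟨A.1 ∪ B.1, A.2.union B.2⟩) x⟫_ℂ).re
         + (⟪x, cproj (ν ⟨A.1 ∩ B.1, A.2.inter B.2⟩) x⟫_ℂ).re) :
    ∃! o : {X : Set ℝ // MeasurableSet X} → ClosedSubspace H,
      IsObservable o ∧
      ∀ C : {C : Set ℝ // IsClosed C}, o ⟨C.1, C.2.measurableSet⟩ = ν C := by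
  have hobs := QuantumValuation.isObservable_innerReg hO1 hO2 hO3
  have hext := QuantumValuation.innerReg_of_isClosed hO2
  refine ⟨QuantumValuation.innerReg ν, ⟨hobs, hext⟩, fun o ⟨ho, hoν⟩ => ?_⟩
  exact ho.ext_of_isClosed hobs fun C => (hoν C).trans (hext C).symm
end
end

section
/- In ℓ², let Q_n denote the ℂ-span of {e_0, …, e_n}. There exists a one-dimensional ℂ-subspace a of ℓ² such that a is contained in the topological closure of the lattice supremum ⨆_n Q_n (which equals all of ℓ²), yet for no n is a contained in Q_n. Consequently, the atom a is not a compact element of the complete lattice of closed subspaces of ℓ², so this lattice is not a continuous lattice. -/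
noncomputable section

/-- The Hilbert space `ℓ²` of square-summable complex sequences. -/
abbrev ell2 : Type := lp (fun _ : ℕ => ℂ) 2

/-- The standard orthonormal basis vectors of `ℓ²`. -/
noncomputable def e (n : ℕ) : ell2 := lp.single 2 n (1 : ℂ)

/-- `Q n` is the span of `{e 0, …, e n}`. -/
noncomputable def Qfin (n : ℕ) : Submodule ℂ ell2 := Submodule.span ℂ (e '' Set.Iic n)

/-- Evaluation at coordinate `m` as a linear map. -/
noncomputable def evalₗ (m : ℕ) : ell2 →ₗ[ℂ] ℂ where
  toFun f := f m
  map_add' f g := by simp only [lp.coeFn_add, Pi.add_apply]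
  map_smul' c f := by simp only [lp.coeFn_smul, Pi.smul_apply, RingHom.id_apply, smul_eq_mul]

lemma mem_Qfin_apply_eq_zero {n : ℕ} {y : ell2} (hy : y ∈ Qfin n) {m : ℕ} (hm : n < m) :
    (y : ∀ _ : ℕ, ℂ) m = 0 := by
  have : Qfin n ≤ LinearMap.ker (evalₗ m) := by
    rw [Qfin, Submodule.span_le]
    rintro _ ⟨k, hk, rfl⟩
    simp only [SetLike.mem_coe, LinearMap.mem_ker]
    change (e k : ∀ _ : ℕ, ℂ) m = 0
    rw [e, lp.single_apply]
    have : k ≠ m := fun h => absurd (h ▸ hk) (not_le.mpr hm)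
    simp [this, Ne.symm this]
  exact this hy

lemma hf2 : Memℓp (fun n : ℕ => ((2 : ℂ)⁻¹) ^ n) 2 := by
  apply memℓp_gen
  have : Summable (fun n : ℕ => ((2 : ℝ)⁻¹ ^ 2) ^ n) :=
    summable_geometric_of_lt_one (by positivity) (by norm_num)
  refine this.congr fun n => ?_
  simp [← pow_mul, Nat.mul_comm]

/-- The vector with coordinates `2⁻ⁿ`. -/
noncomputable def xvec : ell2 := ⟨fun n => ((2 : ℂ)⁻¹) ^ n, hf2⟩

/-- There is a one-dimensional subspace `a = span {x}` of `ℓ²` contained in the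
closure of `⨆ n, Q n` (which is all of `ℓ²`) but in no `Q n`; hence the atom `a`
is not a compact element of the lattice of closed subspaces, which therefore is
not a continuous lattice. -/
theorem exists_atom_not_compact :
    ∃ x : ell2, x ≠ 0 ∧
      (⨆ n, Qfin n).topologicalClosure = ⊤ ∧
      Submodule.span ℂ {x} ≤ (⨆ n, Qfin n).topologicalClosure ∧
      ∀ n, ¬ Submodule.span ℂ {x} ≤ Qfin n := by
  have hx : ∀ m : ℕ, (xvec : ∀ _ : ℕ, ℂ) m = ((2 : ℂ)⁻¹) ^ m := fun m => rfl
  have hxne : xvec ≠ 0 := by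
    intro h
    have := hx 0
    rw [h] at this
    simp at this
  -- the Hilbert basis
  let b : HilbertBasis ℕ ℂ ell2 := HilbertBasis.ofRepr (LinearIsometryEquiv.refl ℂ ell2)
  have hb : ∀ n, b n = e n := fun n => by
    classical
    rw [← b.repr_symm_single]
    rfl
  have htop : (⨆ n, Qfin n).topologicalClosure = ⊤ := by
    rw [eq_top_iff, ← b.dense_span]
    apply Submodule.topologicalClosure_mono
    rw [Submodule.span_le]
    rintro _ ⟨n, rfl⟩
    rw [hb]
    have : e n ∈ Qfin n := Submodule.subset_span ⟨n, le_refl n, rfl⟩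
    exact Submodule.mem_iSup_of_mem n this
  refine ⟨xvec, hxne, htop, by rw [htop]; exact le_top, fun n hle => ?_⟩
  have hxQ : xvec ∈ Qfin n := hle (Submodule.mem_span_singleton_self xvec)
  have := mem_Qfin_apply_eq_zero hxQ (Nat.lt_succ_self n)
  rw [hx] at this
  simp at this
end
end

section
/- There exist a one-dimensional closed subspace P of ℓ² and a monotone sequence (Q_n) of closed subspaces of ℓ² (Q_n ≤ Q_{n+1} for all n) such that P ⊓ Q_n = ⊥ for every n, while the intersection of P with the topological closure of the lattice supremum ⨆_n Q_n equals P ≠ ⊥. In particular, in the lattice of closed subspaces of ℓ², binary meet does not preserve suprema of increasing ω-chains, and therefore the binary join operation on the Hilbert lattice is not continuous. -/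
/-!
With `e` the standard orthonormal basis, take `P = ℂ ∙ e 0` and let `Q n` be spanned by the first
`n` vectors `v k = e 0 + (k + 1)⁻¹ • e (k + 1)`. Since `v k → e 0`, the closure of `⨆ n, Q n`
contains `P`. But `e 0` is not even in the algebraic span of all the `v k`: the functional on
finitely supported coefficient vectors with weights `1, -1, -2, -3, …` kills every `v k` and not
`e 0`, and linear independence of `e` transports this to `ℓ²`.
-/

noncomputable section

open Submodule Set Filter Topology Finsupp

section Semiring

variable {K M : Type*} [Semiring K] [AddCommMonoid M] [Module K M]

theorem monotone_span_image_Iio (v : ℕ → M) : Monotone fun n => span K (v '' Iio n) :=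
  fun _ _ h => span_mono (image_mono (Iio_subset_Iio h))

theorem iSup_span_image_Iio (v : ℕ → M) : ⨆ n, span K (v '' Iio n) = span K (range v) := by
  rw [iSup_span, ← image_iUnion, iUnion_Iio, image_univ]

theorem span_singleton_inf_topologicalClosure_iSup_span_image_Iio [TopologicalSpace M]
    [ContinuousAdd M] [ContinuousConstSMul K M] {v : ℕ → M} {x : M} (hv : Tendsto v atTop (𝓝 x)) :
    (K ∙ x) ⊓ (⨆ n, span K (v '' Iio n)).topologicalClosure = K ∙ x := by
  rw [inf_eq_left, span_singleton_le_iff_mem, iSup_span_image_Iio]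
  exact mem_closure_of_tendsto hv (.of_forall fun k => subset_span (mem_range_self k))

end Semiring

section DivisionRing

variable {K M : Type*} [DivisionRing K] [AddCommGroup M] [Module K M]

theorem Submodule.span_singleton_inf_eq_bot_of_notMem {p : Submodule K M} {x : M} (hx : x ∉ p) :
    (K ∙ x) ⊓ p = ⊥ :=
  disjoint_iff.1 (disjoint_span_singleton.2 fun h => absurd h hx).symm

theorem LinearIndependent.notMem_span_range_add_smul {b : ℕ → M} (hb : LinearIndependent K b)
    {c : ℕ → K} (hc : ∀ k, c k ≠ 0) : b 0 ∉ span K (range fun k => b 0 + c k • b (k + 1)) := by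
  set L := linearCombination K b
  have hv : (fun k => b 0 + c k • b (k + 1)) = L ∘ fun k => single 0 1 + single (k + 1) (c k) := by
    ext k; simp [L]
  rw [hv, range_comp, ← map_span, show b 0 = L (single 0 1) by simp [L]]
  rintro ⟨y, hy, hLy⟩
  rw [hb hLy] at hy
  let φ := linearCombination K fun | 0 => 1 | k + 1 => -(c k)⁻¹
  have hker : span K (range fun k => single 0 1 + single (k + 1) (c k)) ≤ LinearMap.ker φ :=
    span_le.2 <| by rintro _ ⟨k, rfl⟩; simp [φ, hc k]
  simpa [φ] using hker hy

end DivisionRing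

/-- There are a one-dimensional closed subspace `P` of `ℓ²` and an increasing
sequence `(Q n)` of closed subspaces with `P ⊓ Q n = ⊥` for all `n`, while the
meet of `P` with the closure of `⨆ n, Q n` is `P ≠ ⊥`. Hence binary meet does not
preserve suprema of increasing ω-chains in the Hilbert lattice, and binary join
is not continuous. -/
theorem meet_not_continuous_in_hilbert_lattice :
    ∃ (P : Submodule ℂ ell2) (Q : ℕ → Submodule ℂ ell2),
      IsClosed (P : Set ell2) ∧
      (∃ x : ell2, x ≠ 0 ∧ P = Submodule.span ℂ {x}) ∧
      (∀ n, IsClosed ((Q n : Set ell2))) ∧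
      (∀ n, Q n ≤ Q (n + 1)) ∧
      (∀ n, P ⊓ Q n = ⊥) ∧
      P ⊓ (⨆ n, Q n).topologicalClosure = P ∧
      P ≠ ⊥ := by
  -- the standard basis `n ↦ lp.single 2 n 1`
  set e : ℕ → ell2 := ⇑(default : HilbertBasis ℕ ℂ ell2)
  have he : Orthonormal ℂ e := HilbertBasis.orthonormal _
  set v : ℕ → ell2 := fun k => e 0 + (1 / ((k : ℂ) + 1)) • e (k + 1)
  have hv : Tendsto v atTop (𝓝 (e 0)) := by
    have hbdd : IsBoundedUnder (· ≤ ·) atTop fun k => ‖e (k + 1)‖ :=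
      isBoundedUnder_of_eventually_le (.of_forall fun k => (he.1 (k + 1)).le)
    simpa using tendsto_const_nhds.add
      (tendsto_one_div_add_atTop_nhds_zero_nat.zero_smul_isBoundedUnder_le hbdd)
  have hx : e 0 ∉ span ℂ (range v) := he.linearIndependent.notMem_span_range_add_smul
    fun k => one_div_ne_zero (Nat.cast_add_one_ne_zero k)
  have he0 : e 0 ≠ 0 := he.ne_zero 0
  refine ⟨ℂ ∙ e 0, fun n => span ℂ (v '' Iio n), closed_of_finiteDimensional _, ⟨e 0, he0, rfl⟩,
    fun n => ?_, fun n => monotone_span_image_Iio v n.le_succ,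
    fun n => span_singleton_inf_eq_bot_of_notMem fun h => hx (span_mono (image_subset_range _ _) h),
    span_singleton_inf_topologicalClosure_iSup_span_image_Iio hv, by simpa using he0⟩
  have := FiniteDimensional.span_of_finite ℂ ((finite_Iio n).image v)
  exact closed_of_finiteDimensional _
end
end

section
/- Let H be a complex Hilbert space, x ∈ H a unit vector, and for each n ≥ 1 let C_n = { (m : ℂ) • x | m ∈ ℕ, m ≥ n } ⊆ H. Then: each C_n is a closed subset of H; ⋂_{n≥1} C_n = ∅; (⋂_{n≥1} C_n)^⊥⊥ = {0}; and C_n^⊥⊥ = { λ • x | λ ∈ ℂ } for every n ≥ 1. In particular ⋂_{n≥1} (C_n^⊥⊥) ≠ (⋂_{n≥1} C_n)^⊥⊥, so biorthogonalization does not preserve intersections of decreasing sequences of closed sets, i.e. it is not Scott continuous. -/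
/-!
Orthogonal sets only see linear spans, `S^⊥ = (span S)^⊥`, so `S^⊥⊥ = span S` whenever that
span is complete.
Every `C_n` spans the line `ℂ x`, which is finite-dimensional and hence closed, so
`C_n^⊥⊥ = ℂ x`; but the `C_n` have empty intersection, whose biorthogonal is `{0}`.
The sets `C_n` are closed because their points are pairwise at distance at least `‖x‖`.
-/

open scoped InnerProductSpace

noncomputable section

variable {H : Type*} [NormedAddCommGroup H] [InnerProductSpace ℂ H] [CompleteSpace H]

/-- The orthogonal set of a subset `S` of `H`. -/
def orthoSet (S : Set H) : Set H := {y | ∀ z ∈ S, ⟪z, y⟫_ℂ = 0}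

/-- `Cn x n = { m • x | m : ℕ, m ≥ n }`. -/
def Cn (x : H) (n : ℕ) : Set H := {y | ∃ m : ℕ, n ≤ m ∧ y = (m : ℂ) • x}

open Submodule

theorem isClosed_image_natCast_smul {E : Type*} [NormedAddCommGroup E] [NormedSpace ℂ E]
    {x : E} (hx : x ≠ 0) (s : Set ℕ) : IsClosed ((fun m : ℕ => (m : ℂ) • x) '' s) := by
  refine Metric.isClosed_of_pairwise_le_dist (norm_pos_iff.mpr hx) ?_
  rintro _ ⟨m, -, rfl⟩ _ ⟨k, -, rfl⟩ hmk
  have hmk : (m : ℤ) - k ≠ 0 := sub_ne_zero.mpr fun h => hmk (by rw [Int.ofNat_inj.mp h])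
  have h_one_le : 1 ≤ ‖(m : ℂ) - k‖ := by
    rw [show (m : ℂ) - k = ((m - k : ℤ) : ℂ) by push_cast; rfl, Complex.norm_intCast]
    exact_mod_cast Int.one_le_abs hmk
  rw [dist_eq_norm, ← sub_smul, norm_smul]
  exact le_mul_of_one_le_left (norm_nonneg x) h_one_le

section

variable {E : Type*} [NormedAddCommGroup E] [InnerProductSpace ℂ E]

theorem orthoSet_eq_orthogonal_span (S : Set E) : orthoSet S = ((span ℂ S)ᗮ : Set E) := by
  ext y
  have h_inner_eq_zero (u : E) : ⟪u, y⟫_ℂ = 0 ↔ u ∈ (ℂ ∙ y)ᗮ :=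
    mem_orthogonal_singleton_iff_inner_left.symm
  simp only [orthoSet, Set.mem_ofPred_eq, SetLike.mem_coe, mem_orthogonal, h_inner_eq_zero]
  exact (span_le (p := (ℂ ∙ y)ᗮ)).symm

theorem orthoSet_orthoSet_eq_of_span_eq {S : Set E} {K : Submodule ℂ E}
    [K.HasOrthogonalProjection] (hS : span ℂ S = K) : orthoSet (orthoSet S) = K := by
  rw [orthoSet_eq_orthogonal_span, orthoSet_eq_orthogonal_span, span_eq, hS,
    orthogonal_orthogonal]

theorem orthoSet_orthoSet_empty : orthoSet (orthoSet (∅ : Set E)) = {0} := by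
  rw [orthoSet_orthoSet_eq_of_span_eq span_empty, bot_coe]

theorem span_Cn {x : E} {n : ℕ} (hn : 1 ≤ n) : span ℂ (Cn x n) = ℂ ∙ x := by
  refine le_antisymm (span_le.mpr ?_) ?_
  · rintro _ ⟨m, -, rfl⟩
    exact smul_mem _ _ (mem_span_singleton_self x)
  · rw [← span_singleton_smul_eq (r := (n : ℂ)) 
      (Nat.cast_ne_zero.mpr (Nat.one_le_iff_ne_zero.mp hn)).isUnit]
    exact span_mono (Set.singleton_subset_iff.mpr ⟨n, le_rfl, rfl⟩)

theorem orthoSet_orthoSet_Cn {x : E} {n : ℕ} (hn : 1 ≤ n) :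
    orthoSet (orthoSet (Cn x n)) = {y | ∃ l : ℂ, y = l • x} := by
  rw [orthoSet_orthoSet_eq_of_span_eq (span_Cn hn)]
  ext y
  simp [mem_span_singleton, eq_comm]

theorem Cn_eq_image (x : E) (n : ℕ) : Cn x n = (fun m : ℕ => (m : ℂ) • x) '' Set.Ici n := by
  ext y
  simp [Cn, eq_comm]

theorem biInter_Cn_eq_empty {x : E} (hx : x ≠ 0) : ⋂ n ∈ {n : ℕ | 1 ≤ n}, Cn x n = ∅ := by
  refine Set.eq_empty_of_forall_notMem fun y hy => ?_
  simp only [Set.mem_iInter, Set.mem_ofPred_eq] at hy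
  obtain ⟨m, -, rfl⟩ := hy 1 le_rfl
  obtain ⟨k, hk, hmk⟩ := hy (m + 1) (by omega)
  have : m = k := by exact_mod_cast smul_left_injective ℂ hx hmk
  omega

end

/-- For a unit vector `x`: each `Cn x n` (for `n ≥ 1`) is closed, the intersection
`⋂_{n ≥ 1} Cn x n` is empty, its biorthogonal is `{0}`, while each biorthogonal
`(Cn x n)^⊥⊥` is the complex line spanned by `x`; hence biorthogonalization does
not commute with intersections of decreasing sequences of closed sets, i.e. it is
not Scott continuous. -/
theorem biorthogonalization_not_scott_continuous (x : H) (hx : ‖x‖ = 1) :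
    (∀ n, 1 ≤ n → IsClosed (Cn x n)) ∧
    (⋂ n ∈ {n : ℕ | 1 ≤ n}, Cn x n) = ∅ ∧
    orthoSet (orthoSet (⋂ n ∈ {n : ℕ | 1 ≤ n}, Cn x n)) = {0} ∧
    (∀ n, 1 ≤ n → orthoSet (orthoSet (Cn x n)) = {y | ∃ l : ℂ, y = l • x}) ∧
    (⋂ n ∈ {n : ℕ | 1 ≤ n}, orthoSet (orthoSet (Cn x n)))
      ≠ orthoSet (orthoSet (⋂ n ∈ {n : ℕ | 1 ≤ n}, Cn x n)) := by
  have hx0 : x ≠ 0 := norm_ne_zero_iff.mp (hx ▸ one_ne_zero)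
  have h_empty := biInter_Cn_eq_empty hx0
  have h_bot : orthoSet (orthoSet (⋂ n ∈ {n : ℕ | 1 ≤ n}, Cn x n)) = {0} := by
    rw [h_empty, orthoSet_orthoSet_empty]
  refine ⟨fun n _ => Cn_eq_image x n ▸ isClosed_image_natCast_smul hx0 _, h_empty, h_bot,
    fun n hn => orthoSet_orthoSet_Cn hn, fun h => hx0 ?_⟩
  have hx_mem : x ∈ ⋂ n ∈ {n : ℕ | 1 ≤ n}, orthoSet (orthoSet (Cn x n)) :=
    Set.mem_biInter fun n hn => by
      rw [orthoSet_orthoSet_Cn hn]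
      exact ⟨1, (one_smul ℂ x).symm⟩
  rwa [h, h_bot] at hx_mem
end
end

section
/- Let H be a complex Hilbert space, let c and x be unit vectors in H, and let r be a real number with 0 ≤ r < 1. Then √(1 − r²) ≤ |re⟪c, x⟫| if and only if there exists a real number λ with |λ| ≤ 1 such that ‖c − λ • x‖ ≤ r. -/
open scoped InnerProductSpace

/-- For unit vectors `c, x` in a complex Hilbert space and `0 ≤ r < 1`:
`√(1 - r²) ≤ |re⟪c, x⟫|` iff `λ • x` lies in the closed ball of radius `r` about
`c` for some real `λ` with `|λ| ≤ 1`. -/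
theorem sqrt_le_abs_re_inner_iff_exists_smul_mem_closedBall
    {H : Type*} [NormedAddCommGroup H] [InnerProductSpace ℂ H] [CompleteSpace H]
    (c x : H) (hc : ‖c‖ = 1) (hx : ‖x‖ = 1) (r : ℝ) (hr0 : 0 ≤ r) (hr1 : r < 1) :
    Real.sqrt (1 - r ^ 2) ≤ |(⟪c, x⟫_ℂ).re| ↔
      ∃ l : ℝ, |l| ≤ 1 ∧ ‖c - l • x‖ ≤ r := by
  letI : InnerProductSpace ℝ H := InnerProductSpace.rclikeToReal ℂ H
  set t : ℝ := (⟪c, x⟫_ℂ).re with ht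
  have htr : ⟪c, x⟫_ℝ = t := by
    rw [real_inner_eq_re_inner ℂ]; rfl
  have key : ∀ l : ℝ, ‖c - l • x‖ ^ 2 = 1 - 2 * l * t + l ^ 2 := by
    intro l
    have := @norm_sub_sq_real H _ (InnerProductSpace.rclikeToReal ℂ H) c (l • x)
    rw [norm_smul, real_inner_smul_right, htr, hc, hx] at this
    rw [this]; simp [abs_mul_abs_self]; ring_nf
  have habs : |t| ≤ 1 := by
    have := abs_real_inner_le_norm c x
    rw [htr, hc, hx] at this; linarith
  constructor
  · intro h
    refine ⟨t, habs, ?_⟩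
    have h1 : 1 - r ^ 2 ≤ t ^ 2 := by
      have := Real.sq_sqrt (by nlinarith : (0:ℝ) ≤ 1 - r ^ 2)
      nlinarith [abs_nonneg t, sq_abs t, Real.sqrt_nonneg (1 - r ^ 2)]
    have h2 : ‖c - t • x‖ ^ 2 ≤ r ^ 2 := by rw [key]; nlinarith
    calc ‖c - t • x‖ = Real.sqrt (‖c - t • x‖ ^ 2) := (Real.sqrt_sq (norm_nonneg _)).symm
      _ ≤ Real.sqrt (r ^ 2) := Real.sqrt_le_sqrt h2
      _ = r := Real.sqrt_sq hr0
  · rintro ⟨l, hl, hle⟩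
    have h2 : 1 - 2 * l * t + l ^ 2 ≤ r ^ 2 := by
      rw [← key l]; exact pow_le_pow_left₀ (norm_nonneg _) hle 2
    have hlt : l * t ≤ |l| * |t| := by
      calc l * t ≤ |l * t| := le_abs_self _
        _ = |l| * |t| := abs_mul l t
    have h3 : 1 - r ^ 2 ≤ t ^ 2 := by nlinarith [sq_nonneg (|l| - |t|), sq_abs l, sq_abs t]
    calc Real.sqrt (1 - r ^ 2) ≤ Real.sqrt (t ^ 2) := Real.sqrt_le_sqrt h3
      _ = |t| := Real.sqrt_sq_eq_abs t
end

section
/- Let H be a complex Hilbert space, c a unit vector in H, and r a real number with 0 ≤ r < 1. Let L be a closed subspace of H. If B ∩ L ∩ closedBall(c, r) = ∅, then B ∩ L ∩ h(c, r) = ∅, where B = { x ∈ H | ‖x‖ ≤ 1 } is the closed unit ball, closedBall(c, r) = { x ∈ H | ‖x − c‖ ≤ r }, and h(c, r) = { x ∈ H | re⟪c, x⟫ ≥ √(1 − r²) }. -/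
open scoped InnerProductSpace

/-- For a unit vector `c`, `0 ≤ r < 1` and a closed subspace `L` of a complex
Hilbert space: if the unit ball meets `L ∩ closedBall c r` in the empty set, then
the unit ball meets `L ∩ h(c,r)` in the empty set, where `h(c,r)` is the closed
half space `{x | re⟪c, x⟫ ≥ √(1 - r²)}`. -/
theorem halfspace_empty_of_closedBall_empty
    {H : Type*} [NormedAddCommGroup H] [InnerProductSpace ℂ H] [CompleteSpace H]
    (c : H) (hc : ‖c‖ = 1) (r : ℝ) (hr0 : 0 ≤ r) (hr1 : r < 1)
    (L : Submodule ℂ H) (hL : IsClosed (L : Set H))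
    (h : {x : H | ‖x‖ ≤ 1} ∩ (L : Set H) ∩ Metric.closedBall c r = ∅) :
    {x : H | ‖x‖ ≤ 1} ∩ (L : Set H)
      ∩ {x : H | Real.sqrt (1 - r ^ 2) ≤ (⟪c, x⟫_ℂ).re} = ∅ := by
  rw [Set.eq_empty_iff_forall_notMem] at h ⊢
  rintro x ⟨⟨hxB, hxL⟩, hxh⟩
  have hr2 : (0:ℝ) < 1 - r ^ 2 := by nlinarith
  set s := Real.sqrt (1 - r ^ 2) with hs
  have hs0 : 0 < s := Real.sqrt_pos.2 hr2
  have hssq : s ^ 2 = 1 - r ^ 2 := Real.sq_sqrt hr2.le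
  have hre : s ≤ (⟪c, x⟫_ℂ).re := hxh
  have hx0 : x ≠ 0 := by
    rintro rfl
    simp only [inner_zero_right, Complex.zero_re] at hre
    linarith
  have hn0 : (0:ℝ) < ‖x‖ := norm_pos_iff.2 hx0
  set z := ⟪x, c⟫_ℂ with hz
  have hzre : s ≤ ‖z‖ := by
    calc s ≤ (⟪c, x⟫_ℂ).re := hre
      _ ≤ ‖⟪c, x⟫_ℂ‖ := Complex.re_le_norm _
      _ = ‖z‖ := norm_inner_symm c x
  have hCS : ‖z‖ ≤ ‖x‖ := by
    calc ‖z‖ ≤ ‖x‖ * ‖c‖ := norm_inner_le_norm x c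
      _ = ‖x‖ := by rw [hc, mul_one]
  set a : ℂ := z / ((‖x‖ : ℂ) ^ 2) with ha
  set y := a • x with hy
  have hna : ‖a‖ = ‖z‖ / ‖x‖ ^ 2 := by
    rw [ha, norm_div]
    norm_num
  have hny : ‖y‖ = ‖z‖ / ‖x‖ := by
    rw [hy, norm_smul, hna]
    field_simp
  have hyB : ‖y‖ ≤ 1 := by
    rw [hny, div_le_one hn0]; exact hCS
  have hyL : y ∈ (L : Set H) := L.smul_mem a hxL
  have hinner : (⟪y, c⟫_ℂ).re = ‖z‖ ^ 2 / ‖x‖ ^ 2 := by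
    rw [hy, inner_smul_left, ← hz, ha, map_div₀]
    have : (starRingEnd ℂ) ((‖x‖ : ℂ) ^ 2) = ((‖x‖ : ℂ) ^ 2) := by
      simp [map_pow]
    rw [this, div_mul_eq_mul_div, Complex.conj_mul']
    have hxC : ((‖x‖ : ℂ) ^ 2) = ((‖x‖ ^ 2 : ℝ) : ℂ) := by push_cast; ring
    have hzC : ((‖z‖ : ℂ) ^ 2) = ((‖z‖ ^ 2 : ℝ) : ℂ) := by push_cast; ring
    rw [hxC, hzC, ← Complex.ofReal_div, Complex.ofReal_re]
  have hexp : ‖y - c‖ ^ 2 = ‖y‖ ^ 2 - 2 * (⟪y, c⟫_ℂ).re + ‖c‖ ^ 2 := by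
    have := @norm_sub_sq ℂ _ _ _ _ y c
    simpa using this
  have hsq : ‖y - c‖ ^ 2 ≤ r ^ 2 := by
    rw [hexp, hinner, hny, hc]
    have hx1 : ‖x‖ ≤ 1 := hxB
    have h1 : ‖z‖ ^ 2 / ‖x‖ ^ 2 ≥ ‖z‖ ^ 2 := by
      rw [ge_iff_le, le_div_iff₀ (by positivity)]
      have hx2 : ‖x‖ ^ 2 ≤ 1 := by nlinarith
      exact mul_le_of_le_one_right (sq_nonneg ‖z‖) hx2
    have h2 : (‖z‖ / ‖x‖) ^ 2 = ‖z‖ ^ 2 / ‖x‖ ^ 2 := by ring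
    nlinarith
  have hball : ‖y - c‖ ≤ r := by
    nlinarith [norm_nonneg (y - c)]
  exact h y ⟨⟨hyB, hyL⟩, Metric.mem_closedBall.2 (by rwa [dist_eq_norm])⟩
end

section
/- Let H be a complex Hilbert space, c a unit vector in H, and r a real number with 0 ≤ r < 1. Let L be a closed subspace of H. If B ∩ L ∩ h(c, r) = ∅, then B ∩ L ∩ closedBall(c, r) = ∅, where B = { x ∈ H | ‖x‖ ≤ 1 } is the closed unit ball, closedBall(c, r) = { x ∈ H | ‖x − c‖ ≤ r }, and h(c, r) = { x ∈ H | re⟪c, x⟫ ≥ √(1 − r²) }. -/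
open scoped InnerProductSpace

/-- For a unit vector `c`, `0 ≤ r < 1` and a closed subspace `L` of a complex
Hilbert space: if the unit ball meets `L ∩ h(c,r)` in the empty set, where
`h(c,r)` is the closed half space `{x | re⟪c, x⟫ ≥ √(1 - r²)}`, then the unit
ball meets `L ∩ closedBall c r` in the empty set. -/
theorem closedBall_empty_of_halfspace_empty
    {H : Type*} [NormedAddCommGroup H] [InnerProductSpace ℂ H] [CompleteSpace H]
    (c : H) (hc : ‖c‖ = 1) (r : ℝ) (hr0 : 0 ≤ r) (hr1 : r < 1)
    (L : Submodule ℂ H) (hL : IsClosed (L : Set H))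
    (h : {x : H | ‖x‖ ≤ 1} ∩ (L : Set H)
      ∩ {x : H | Real.sqrt (1 - r ^ 2) ≤ (⟪c, x⟫_ℂ).re} = ∅) :
    {x : H | ‖x‖ ≤ 1} ∩ (L : Set H) ∩ Metric.closedBall c r = ∅ := by
  rw [Set.eq_empty_iff_forall_notMem] at h ⊢
  rintro x ⟨⟨hx1, hxL⟩, hxc⟩
  rw [Metric.mem_closedBall, dist_eq_norm] at hxc
  have hs : 1 - r ≤ ‖x‖ := by
    have h1 : ‖c‖ - ‖x‖ ≤ ‖c - x‖ := norm_sub_norm_le c x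
    rw [norm_sub_rev] at h1
    linarith
  set s := ‖x‖ with hsdef
  have hs0 : 0 < s := by linarith
  -- inner product lower bound
  have hexp : ‖x - c‖ ^ 2 = s ^ 2 - 2 * (⟪x, c⟫_ℂ).re + ‖c‖ ^ 2 :=
    @norm_sub_sq ℂ H _ _ _ x c
  have hsym : (⟪x, c⟫_ℂ).re = (⟪c, x⟫_ℂ).re := (inner_re_symm (𝕜 := ℂ) c x).symm
  have hxc2 : ‖x - c‖ ^ 2 ≤ r ^ 2 := by
    have := sq_le_sq' (by linarith [norm_nonneg (x - c)]) hxc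
    simpa using this
  have hre : (1 + s ^ 2 - r ^ 2) / 2 ≤ (⟪c, x⟫_ℂ).re := by
    rw [hc] at hexp
    nlinarith [hexp, hxc2, hsym]
  -- AM-GM
  have h1r : (0:ℝ) ≤ 1 - r ^ 2 := by nlinarith
  have hsq : Real.sqrt (1 - r ^ 2) ^ 2 = 1 - r ^ 2 := Real.sq_sqrt h1r
  have key : Real.sqrt (1 - r ^ 2) * s ≤ (⟪c, x⟫_ℂ).re := by
    nlinarith [sq_nonneg (Real.sqrt (1 - r ^ 2) - s), hre, hsq]
  -- apply h to the normalized vector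
  refine h ((s⁻¹ : ℂ) • x) ⟨⟨?_, L.smul_mem _ hxL⟩, ?_⟩
  · simp only [Set.mem_setOf_eq, norm_smul, norm_inv, Complex.norm_real,
      Real.norm_eq_abs, abs_of_pos hs0, ← hsdef]
    rw [inv_mul_cancel₀ hs0.ne']
  · simp only [Set.mem_setOf_eq, inner_smul_right, ← Complex.ofReal_inv,
      Complex.re_ofReal_mul]
    rw [le_inv_mul_iff₀ hs0, mul_comm]
    exact key
end

section
/- Let H be a complex Hilbert space, c a unit vector in H, and r a real number with 0 ≤ r < 1. Let L be a closed subspace of H. Then the following are equivalent: (i) B ∩ L ∩ h(c, r) = ∅; (ii) L ∩ closedBall(c, r) = ∅; (iii) infDist(c, L) > r; where B = { x ∈ H | ‖x‖ ≤ 1 } is the closed unit ball, closedBall(c, r) = { x ∈ H | ‖x − c‖ ≤ r }, h(c, r) = { x ∈ H | re⟪c, x⟫ ≥ √(1 − r²) }, and infDist(c, L) is the infimum of ‖c − y‖ over y ∈ L. -/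
/-!
Both `B ∩ h(c, r)` and `closedBall c r` meet the subspace `L` exactly when some unit vector
`x ∈ L` has `√(1 - r²) ≤ re⟪c, x⟫`. For the unit ball this is seen by normalising. For the ball
around `c`, the ray through a unit vector `x` comes closest to `c` at `re⟪c, x⟫ • x`, at distance
`√(1 - re⟪c, x⟫²)`. Finally, `infDist c L` is attained at the orthogonal projection of `c`
onto `L`.
-/

open scoped InnerProductSpace
open Metric RCLike

section

variable {𝕜 E : Type*} [RCLike 𝕜] [NormedAddCommGroup E] [InnerProductSpace 𝕜 E]

theorem re_inner_ofReal_smul_right (c x : E) (t : ℝ) :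
    re ⟪c, (t : 𝕜) • x⟫_𝕜 = t * re ⟪c, x⟫_𝕜 := by
  rw [inner_smul_real_right, smul_re]

theorem norm_re_inner_smul_sub_sq {c x : E} (hc : ‖c‖ = 1) (hx : ‖x‖ = 1) :
    ‖((re ⟪c, x⟫_𝕜 : ℝ) : 𝕜) • x - c‖ ^ 2 = 1 - re ⟪c, x⟫_𝕜 ^ 2 := by
  rw [@norm_sub_sq 𝕜, inner_re_symm _ c, re_inner_ofReal_smul_right, norm_smul, norm_ofReal, hx,
    hc, mul_one, sq_abs]
  ring

theorem ofReal_re_inner_smul_mem_closedBall {c x : E} (hc : ‖c‖ = 1) (hx : ‖x‖ = 1) {r : ℝ}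
    (hr : 0 ≤ r) (hcx : √(1 - r ^ 2) ≤ re ⟪c, x⟫_𝕜) :
    ((re ⟪c, x⟫_𝕜 : ℝ) : 𝕜) • x ∈ closedBall c r := by
  have hu : 1 - r ^ 2 ≤ re ⟪c, x⟫_𝕜 ^ 2 := (Real.sqrt_le_iff.1 hcx).2
  have hsq : ‖((re ⟪c, x⟫_𝕜 : ℝ) : 𝕜) • x - c‖ ^ 2 ≤ r ^ 2 := by
    rw [norm_re_inner_smul_sub_sq hc hx]
    linarith
  rw [mem_closedBall, dist_eq_norm]
  exact (pow_le_pow_iff_left₀ (norm_nonneg _) hr two_ne_zero).1 hsq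

theorem sqrt_one_sub_sq_mul_norm_le_re_inner {c y : E} (hc : ‖c‖ = 1) {r : ℝ} (hr : r ≤ 1)
    (hy : y ∈ closedBall c r) : √(1 - r ^ 2) * ‖y‖ ≤ re ⟪c, y⟫_𝕜 := by
  have hr0 : 0 ≤ r := dist_nonneg.trans hy
  have hs : √(1 - r ^ 2) ^ 2 = 1 - r ^ 2 := Real.sq_sqrt (by nlinarith)
  have hyc : ‖y - c‖ ^ 2 ≤ r ^ 2 := by
    rw [← dist_eq_norm]
    exact pow_le_pow_left₀ dist_nonneg hy 2
  have hexpand := @norm_sub_sq 𝕜 _ _ _ _ y c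
  rw [inner_re_symm, hc] at hexpand
  nlinarith [sq_nonneg (√(1 - r ^ 2) - ‖y‖)]

namespace Submodule

theorem infDist_eq_norm_sub_starProjection (K : Submodule 𝕜 E) [K.HasOrthogonalProjection]
    (v : E) : infDist v (K : Set E) = ‖v - K.starProjection v‖ := by
  rw [starProjection_minimal, infDist_eq_iInf]
  simp only [dist_eq_norm]
  rfl

theorem inter_closedBall_eq_empty_iff_lt_infDist (K : Submodule 𝕜 E) [K.HasOrthogonalProjection]
    (c : E) (r : ℝ) : (K : Set E) ∩ closedBall c r = ∅ ↔ r < infDist c (K : Set E) := by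
  refine ⟨fun h => ?_, fun h => Set.disjoint_iff_inter_eq_empty.1
    (disjoint_closedBall_of_lt_infDist h).symm⟩
  by_contra! hle
  rw [K.infDist_eq_norm_sub_starProjection] at hle
  refine h.subset ⟨K.starProjection_apply_mem c, ?_⟩
  rwa [mem_closedBall, dist_comm, dist_eq_norm]

theorem exists_norm_eq_one_mul_re_inner_eq (K : Submodule 𝕜 E) {y : E} (hyK : y ∈ K)
    (hy : y ≠ 0) (c : E) : ∃ x ∈ K, ‖x‖ = 1 ∧ ‖y‖ * re ⟪c, x⟫_𝕜 = re ⟪c, y⟫_𝕜 := by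
  have hy' : ‖y‖ ≠ 0 := norm_ne_zero_iff.2 hy
  refine ⟨((‖y‖⁻¹ : ℝ) : 𝕜) • y, K.smul_mem _ hyK, ?_, ?_⟩
  · rw [norm_smul, norm_ofReal, abs_inv, abs_norm, inv_mul_cancel₀ hy']
  · rw [re_inner_ofReal_smul_right, ← mul_assoc, mul_inv_cancel₀ hy', one_mul]

theorem inter_closedBall_nonempty_iff (K : Submodule 𝕜 E) {c : E} (hc : ‖c‖ = 1)
    {r : ℝ} (hr0 : 0 ≤ r) (hr1 : r < 1) :
    ((K : Set E) ∩ closedBall c r).Nonempty ↔ ∃ x ∈ K, ‖x‖ = 1 ∧ √(1 - r ^ 2) ≤ re ⟪c, x⟫_𝕜 := by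
  constructor
  · rintro ⟨y, hyK, hy⟩
    have hy0 : y ≠ 0 := by
      rintro rfl
      rw [mem_closedBall, dist_zero_left, hc] at hy
      linarith
    obtain ⟨x, hxK, hx, hxy⟩ := K.exists_norm_eq_one_mul_re_inner_eq hyK hy0 c
    refine ⟨x, hxK, hx, le_of_mul_le_mul_left ?_ (norm_pos_iff.2 hy0)⟩
    rw [hxy, mul_comm]
    exact sqrt_one_sub_sq_mul_norm_le_re_inner hc hr1.le hy
  · rintro ⟨x, hxK, hx, hcx⟩
    exact ⟨_, K.smul_mem _ hxK, ofReal_re_inner_smul_mem_closedBall hc hx hr0 hcx⟩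

theorem unitBall_inter_halfspace_nonempty_iff (K : Submodule 𝕜 E) (c : E) {s : ℝ}
    (hs : 0 < s) :
    ({x : E | ‖x‖ ≤ 1} ∩ (K : Set E) ∩ {x : E | s ≤ re ⟪c, x⟫_𝕜}).Nonempty ↔
      ∃ x ∈ K, ‖x‖ = 1 ∧ s ≤ re ⟪c, x⟫_𝕜 := by
  constructor
  · rintro ⟨y, ⟨hy1 : ‖y‖ ≤ 1, hyK⟩, hys : s ≤ re ⟪c, y⟫_𝕜⟩
    have hy0 : y ≠ 0 := by
      rintro rfl
      rw [inner_zero_right, map_zero] at hys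
      linarith
    obtain ⟨x, hxK, hx, hxy⟩ := K.exists_norm_eq_one_mul_re_inner_eq hyK hy0 c
    have hx0 : 0 ≤ re ⟪c, x⟫_𝕜 := (pos_of_mul_pos_right (hxy ▸ hs.trans_le hys) (norm_nonneg y)).le
    refine ⟨x, hxK, hx, ?_⟩
    calc s ≤ re ⟪c, y⟫_𝕜 := hys
      _ = ‖y‖ * re ⟪c, x⟫_𝕜 := hxy.symm
      _ ≤ re ⟪c, x⟫_𝕜 := mul_le_of_le_one_left hx0 hy1
  · rintro ⟨x, hxK, hx, hxs⟩
    exact ⟨x, ⟨hx.le, hxK⟩, hxs⟩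

end Submodule

end

/-- For a unit vector `c`, `0 ≤ r < 1` and a closed subspace `L` of a complex
Hilbert space, the following are equivalent: (i) the unit ball meets
`L ∩ h(c,r)` in the empty set (with `h(c,r) = {x | re⟪c, x⟫ ≥ √(1 - r²)}`);
(ii) `L ∩ closedBall c r = ∅`; (iii) `infDist c L > r`. -/
theorem halfspace_closedBall_infDist_tfae
    {H : Type*} [NormedAddCommGroup H] [InnerProductSpace ℂ H] [CompleteSpace H]
    (c : H) (hc : ‖c‖ = 1) (r : ℝ) (hr0 : 0 ≤ r) (hr1 : r < 1)
    (L : Submodule ℂ H) (hL : IsClosed (L : Set H)) :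
    ({x : H | ‖x‖ ≤ 1} ∩ (L : Set H)
        ∩ {x : H | Real.sqrt (1 - r ^ 2) ≤ (⟪c, x⟫_ℂ).re} = ∅ ↔
      (L : Set H) ∩ Metric.closedBall c r = ∅) ∧
    ((L : Set H) ∩ Metric.closedBall c r = ∅ ↔
      r < Metric.infDist c (L : Set H)) := by
  have : CompleteSpace L := hL.completeSpace_coe
  have hs : 0 < √(1 - r ^ 2) := Real.sqrt_pos.2 (by nlinarith)
  refine ⟨?_, L.inter_closedBall_eq_empty_iff_lt_infDist c r⟩
  rw [← Set.not_nonempty_iff_eq_empty, ← Set.not_nonempty_iff_eq_empty, not_iff_not]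
  exact (L.unitBall_inter_halfspace_nonempty_iff c hs).trans
    (L.inter_closedBall_nonempty_iff hc hr0 hr1).symm
end

section
/- Let H be a complex Hilbert space, c a unit vector in H, and r a real number with 0 ≤ r < 1. Let L be a closed subspace of H. Then B ∩ L ⊆ H(c, r) if and only if infDist(c, L) > r, where B = { x ∈ H | ‖x‖ ≤ 1 } is the closed unit ball, H(c, r) = { x ∈ H | re⟪c, x⟫ < √(1 − r²) }, and infDist(c, L) is the infimum of ‖c − y‖ over y ∈ L. -/
/-!
Let `u` be the orthogonal projection of `c` onto `L` and `v = c - u`. Since `⟪c, x⟫ = ⟪u, x⟫`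
for `x ∈ L`, the maximum of `re⟪c, x⟫` over the unit ball of `L` is `‖u‖`, attained at
`u / ‖u‖`; on the other hand `infDist c L = ‖v‖` and `‖u‖² + ‖v‖² = ‖c‖² = 1`. So the inclusion
says `‖u‖ < √(1 - r²)`, i.e. `‖u‖² < 1 - r²`, i.e. `r² < ‖v‖²`.
-/

open scoped InnerProductSpace

theorem lt_sqrt_one_sub_sq_iff {a b r : ℝ} (ha : 0 ≤ a) (hb : 0 ≤ b) (hr : 0 ≤ r)
    (hab : a ^ 2 + b ^ 2 = 1) : a < √(1 - r ^ 2) ↔ r < b := by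
  rw [Real.lt_sqrt ha, ← pow_lt_pow_iff_left₀ hr hb two_ne_zero]
  constructor <;> intro h <;> linarith

namespace Submodule

variable {𝕜 E : Type*} [RCLike 𝕜] [NormedAddCommGroup E] [InnerProductSpace 𝕜 E]
  (K : Submodule 𝕜 E) [K.HasOrthogonalProjection]

open RCLike

theorem infDist_eq_norm_sub_starProjection_s12 (c : E) :
    Metric.infDist c K = ‖c - K.starProjection c‖ := by
  simp only [Metric.infDist_eq_iInf, dist_eq_norm, starProjection_minimal]
  rfl

theorem norm_sq_starProjection_add_norm_sq_sub (c : E) :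
    ‖K.starProjection c‖ ^ 2 + ‖c - K.starProjection c‖ ^ 2 = ‖c‖ ^ 2 := by
  rw [K.norm_sq_eq_add_norm_sq_starProjection c, starProjection_orthogonal_val]

theorem re_inner_le_norm_starProjection (c : E) {x : E} (hx : x ∈ K) (hx1 : ‖x‖ ≤ 1) :
    re ⟪c, x⟫_𝕜 ≤ ‖K.starProjection c‖ :=
  calc re ⟪c, x⟫_𝕜 = re ⟪K.starProjection c, x⟫_𝕜 := by
        rw [inner_starProjection_left_eq_right, starProjection_eq_self_iff.mpr hx]
    _ ≤ ‖K.starProjection c‖ * ‖x‖ := re_inner_le_norm _ _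
    _ ≤ ‖K.starProjection c‖ := mul_le_of_le_one_right (norm_nonneg _) hx1

theorem re_inner_inv_norm_smul_starProjection (c : E) :
    re ⟪c, ((‖K.starProjection c‖⁻¹ : ℝ) : 𝕜) • K.starProjection c⟫_𝕜 = ‖K.starProjection c‖ := by
  rw [inner_smul_right, re_ofReal_mul, ← inner_starProjection_left_eq_right,
    re_inner_starProjection_eq_normSq, starProjection_apply, coe_norm, sq, ← mul_assoc,
    inv_mul_mul_self]

theorem unitBall_inter_subset_re_inner_lt_iff (c : E) (s : ℝ) :
    {x : E | ‖x‖ ≤ 1} ∩ (K : Set E) ⊆ {x : E | re ⟪c, x⟫_𝕜 < s} ↔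
      ‖K.starProjection c‖ < s := by
  refine ⟨fun h => ?_, fun h x ⟨hx1, hx⟩ => (K.re_inner_le_norm_starProjection c hx hx1).trans_lt h⟩
  have hmem := K.smul_mem ((‖K.starProjection c‖⁻¹ : ℝ) : 𝕜) (K.starProjection_apply_mem c)
  have hnorm : ‖((‖K.starProjection c‖⁻¹ : ℝ) : 𝕜) • K.starProjection c‖ ≤ 1 := by
    rw [norm_smul, norm_ofReal, abs_inv, abs_norm]
    exact inv_mul_le_one_of_le₀ le_rfl (norm_nonneg _)
  exact K.re_inner_inv_norm_smul_starProjection c ▸ h ⟨hnorm, hmem⟩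

end Submodule

theorem unitBall_inter_subspace_subset_halfspace_iff_infDist_gt_general
    {H : Type*} [NormedAddCommGroup H] [InnerProductSpace ℂ H] [CompleteSpace H]
    (c : H) (hc : ‖c‖ = 1) (r : ℝ) (hr0 : 0 ≤ r)
    (L : Submodule ℂ H) (hL : IsClosed (L : Set H)) :
    {x : H | ‖x‖ ≤ 1} ∩ (L : Set H)
        ⊆ {x : H | (⟪c, x⟫_ℂ).re < Real.sqrt (1 - r ^ 2)} ↔
      r < Metric.infDist c (L : Set H) := by
  have : CompleteSpace L := hL.completeSpace_coe
  rw [L.infDist_eq_norm_sub_starProjection_s12]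
  refine (L.unitBall_inter_subset_re_inner_lt_iff c _).trans
    (lt_sqrt_one_sub_sq_iff (norm_nonneg _) (norm_nonneg _) hr0 ?_)
  rw [L.norm_sq_starProjection_add_norm_sq_sub, hc, one_pow]

/-- For a unit vector `c`, `0 ≤ r < 1` and a closed subspace `L` of a complex
Hilbert space: the intersection of the unit ball with `L` is contained in the open
half space `H(c,r) = {x | re⟪c, x⟫ < √(1 - r²)}` iff `infDist c L > r`. -/
theorem unitBall_inter_subspace_subset_halfspace_iff_infDist_gt
    {H : Type*} [NormedAddCommGroup H] [InnerProductSpace ℂ H] [CompleteSpace H]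
    (c : H) (hc : ‖c‖ = 1) (r : ℝ) (hr0 : 0 ≤ r) (hr1 : r < 1)
    (L : Submodule ℂ H) (hL : IsClosed (L : Set H)) :
    {x : H | ‖x‖ ≤ 1} ∩ (L : Set H)
        ⊆ {x : H | (⟪c, x⟫_ℂ).re < Real.sqrt (1 - r ^ 2)} ↔
      r < Metric.infDist c (L : Set H) :=
  unitBall_inter_subspace_subset_halfspace_iff_infDist_gt_general c hc r hr0 L hL
end

section
/- Let p : ℕ → (OnePoint ℕ → Prop) be a sequence of predicates on the one-point compactification of ℕ, and let p_∞ : OnePoint ℕ → Prop. Assume the sequence (p_k) converges to p_∞ continuously: for every sequence (x_k) in OnePoint ℕ converging to some x_∞ ∈ OnePoint ℕ, the sequence of propositions (p_k (x_k)) converges to p_∞(x_∞) in the Sierpiński topology on Prop. If p_∞ z holds for every z ∈ OnePoint ℕ, then for all sufficiently large k, p_k z holds for every z ∈ OnePoint ℕ. In other words, the infimum map from Σ^{N_∞} to Σ, sending p to ⋀_{z} p(z), is sequentially continuous. -/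
open Filter Topology

/-- The infimum map `Σ^{N_∞} → Σ`, `p ↦ ⋀_z p z`, is sequentially continuous:
if a sequence of predicates `(p k)` on the one-point compactification of `ℕ`
converges continuously (with respect to the Sierpiński topology on `Prop`) to
`p'`, and `p'` holds everywhere, then eventually `p k` holds everywhere. -/
theorem inf_map_sequentially_continuous
    (p : ℕ → OnePoint ℕ → Prop) (p' : OnePoint ℕ → Prop)
    (h : ∀ (x : ℕ → OnePoint ℕ) (x' : OnePoint ℕ), Tendsto x atTop (𝓝 x') →
      Tendsto (fun k => p k (x k)) atTop (𝓝 (p' x')))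
    (h' : ∀ z, p' z) :
    ∀ᶠ k in atTop, ∀ z, p k z := by
  by_contra hc
  rw [Filter.not_eventually] at hc
  simp only [not_forall] at hc
  obtain ⟨φ, hφ, hz⟩ := Filter.extraction_of_frequently_atTop hc
  choose z hzbad using hz
  obtain ⟨x', -, ψ, hψ, hconv⟩ :=
    (isCompact_univ : IsCompact (Set.univ : Set (OnePoint ℕ))).tendsto_subseq
      (x := z) (fun n => Set.mem_univ _)
  set σ : ℕ → ℕ := φ ∘ ψ with hσ
  have hσmono : StrictMono σ := hφ.comp hψ
  classical
  set x : ℕ → OnePoint ℕ := fun k => if hk : ∃ j, σ j = k then z (ψ hk.choose) else x' with hx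
  have hxval : ∀ j, x (σ j) = z (ψ j) := by
    intro j
    have hk : ∃ j', σ j' = σ j := ⟨j, rfl⟩
    have : hk.choose = j := hσmono.injective hk.choose_spec
    simp [hx, dif_pos hk, this]
  have hxt : Tendsto x atTop (𝓝 x') := by
    intro U hU
    rw [mem_map, mem_atTop_sets]
    obtain ⟨J, hJ⟩ := (mem_atTop_sets.mp (hconv hU))
    refine ⟨σ J, fun k hk => ?_⟩
    by_cases hex : ∃ j, σ j = k
    · obtain ⟨j, rfl⟩ := hex
      have : J ≤ j := hσmono.le_iff_le.mp hk
      have := hJ j this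
      simpa [hxval] using this
    · show x k ∈ U
      simp only [hx, dif_neg hex]
      exact mem_of_mem_nhds hU
  have htend := h x x' hxt
  have : ∀ᶠ k in atTop, p k (x k) := by
    have hopen : IsOpen ({q : Prop | q}) := by
      convert isOpen_singleton_true using 1
      ext q; simp only [Set.mem_setOf_eq, Set.mem_singleton_iff, eq_iff_iff, iff_true]
    have hmem : p' x' ∈ {q : Prop | q} := h' x'
    exact htend.eventually (hopen.mem_nhds hmem)
  obtain ⟨K, hK⟩ := mem_atTop_sets.mp this
  have hKσ : K ≤ σ K := hσmono.le_apply
  have h2 := hK (σ K) hKσ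
  simp only [Set.mem_setOf_eq, hxval] at h2
  exact hzbad (ψ K) h2
end
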